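/- arXiv:1506.05386 — 12 statements merged into one kernel-verified Lean document; each statement's English description precedes it below -/
import Mathlib

section
/- For every integer n ≥ 2, the labeling length of the path P_n on n vertices equals ⌊n/2⌋, i.e. λ(P_n) = ⌊n/2⌋. -/
/-!
A label `k ≥ 1` can be shared by at most two vertices of `P_n`, since no three points of a line
are pairwise at distance `k`, and the label `0` by at most one; hence `n ≤ 2l + 1`. Conversely,
with `m = n / 2`, label the first `m + 1` vertices `m, m - 2, …, |m - 2j|, …, m`, so that equal
labels sit at mirror-image positions whose distance is exactly the label, and label the remaining
vertices in the same way with the next parity: every label in `1, …, m` occurs.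
-/

/-- `f` is a distance `l`-labeling of `G`: its image is `{0,…,l}` or `{1,…,l}`, and any two
distinct vertices sharing a label `k` are at graph distance exactly `k`. -/
def IsDistLabeling {V : Type*} (G : SimpleGraph V) (l : ℕ) (f : V → ℕ) : Prop :=
  (Set.range f = Set.Icc 0 l ∨ Set.range f = Set.Icc 1 l) ∧
    ∀ u v : V, u ≠ v → f u = f v → G.dist u v = f u

/-- The labeling length of `G`: the least `l` admitting a distance `l`-labeling. -/
noncomputable def labelingLength {V : Type*} (G : SimpleGraph V) : ℕ :=
  sInf {l : ℕ | ∃ f : V → ℕ, IsDistLabeling G l f}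

open Finset

theorem Fintype.card_le_two_mul_add_one_of_card_fiber_le {V : Type*} [Fintype V] {f : V → ℕ}
    {l : ℕ} (hle : ∀ v, f v ≤ l) (h0 : #{v | f v = 0} ≤ 1)
    (hpos : ∀ k, 1 ≤ k → #{v | f v = k} ≤ 2) :
    Fintype.card V ≤ 2 * l + 1 := by
  calc Fintype.card V = ∑ k ∈ range (l + 1), #{v | f v = k} :=
        card_eq_sum_card_fiberwise fun v _ ↦ mem_range.2 (Nat.lt_succ_of_le (hle v))
    _ = ∑ k ∈ range l, #{v | f v = k + 1} + #{v | f v = 0} := sum_range_succ' _ _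
    _ ≤ ∑ _k ∈ range l, 2 + 1 := by
        gcongr with k
        exact hpos (k + 1) k.succ_pos
    _ = 2 * l + 1 := by simp [mul_comm]

theorem range_eq_Icc_zero_or_Icc_one {α : Type*} {f : α → ℕ} {l : ℕ} (hle : ∀ a, f a ≤ l)
    (hsurj : ∀ k, 1 ≤ k → k ≤ l → ∃ a, f a = k) :
    Set.range f = Set.Icc 0 l ∨ Set.range f = Set.Icc 1 l := by
  by_cases h0 : 0 ∈ Set.range f
  · left
    ext k
    refine ⟨fun ⟨a, ha⟩ ↦ ⟨k.zero_le, ha ▸ hle a⟩, fun hk ↦ ?_⟩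
    rcases Nat.eq_zero_or_pos k with rfl | hpos
    exacts [h0, hsurj k hpos hk.2]
  · right
    ext k
    refine ⟨fun ⟨a, ha⟩ ↦ ⟨Nat.one_le_iff_ne_zero.2 ?_, ha ▸ hle a⟩, fun hk ↦ hsurj k hk.1 hk.2⟩
    rintro rfl
    exact h0 ⟨a, ha⟩

namespace IsDistLabeling

variable {V : Type*} {G : SimpleGraph V} {l : ℕ} {f : V → ℕ}

theorem apply_le (hf : IsDistLabeling G l f) (v : V) : f v ≤ l := by
  have hv := Set.mem_range_self (f := f) v
  rcases hf.1 with h | h <;> rw [h] at hv <;> exact hv.2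

theorem card_fiber_zero_le_one [Fintype V] (hf : IsDistLabeling G l f) (hG : G.Connected) :
    #{v | f v = 0} ≤ 1 := by
  refine card_le_one.2 fun u hu v hv ↦ by_contra fun huv ↦ huv ?_
  simp only [mem_filter, mem_univ, true_and] at hu hv
  have := hf.2 u v huv (hu.trans hv.symm)
  rwa [hu, hG.dist_eq_zero_iff] at this

end IsDistLabeling

namespace SimpleGraph

theorem natAbs_sub_le_length_of_walk_pathGraph {n : ℕ} {u v : Fin n}
    (p : (pathGraph n).Walk u v) : ((u : ℤ) - v).natAbs ≤ p.length := by
  induction p with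
  | nil => simp
  | cons h _ ih =>
    rw [pathGraph_adj] at h
    rw [Walk.length_cons]
    omega

theorem dist_pathGraph_le_of_add_eq {n : ℕ} (d : ℕ) {u v : Fin n} (h : (u : ℕ) + d = v) :
    (pathGraph n).dist u v ≤ d := by
  induction d generalizing u with
  | zero => simp [Fin.ext (by omega : (u : ℕ) = v)]
  | succ d ih =>
    let w : Fin n := ⟨u + 1, by omega⟩
    have huw : (pathGraph n).Adj u w := pathGraph_adj.2 (Or.inl rfl)
    calc (pathGraph n).dist u v ≤ (pathGraph n).dist u w + (pathGraph n).dist w v :=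
          huw.reachable.dist_triangle_left v
      _ ≤ 1 + d := by
          rw [dist_eq_one_iff_adj.2 huw]
          exact Nat.add_le_add_left (ih (by simp only [w]; omega)) 1
      _ = d + 1 := Nat.add_comm 1 d

theorem dist_pathGraph {n : ℕ} (u v : Fin n) :
    (pathGraph n).dist u v = ((u : ℤ) - v).natAbs := by
  obtain ⟨p, hp⟩ := (pathGraph_preconnected n u v).exists_walk_length_eq_dist
  have hge := natAbs_sub_le_length_of_walk_pathGraph p
  rcases le_total (u : ℕ) v with huv | hvu
  · have := dist_pathGraph_le_of_add_eq (v - u) (Nat.add_sub_cancel' huv)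
    omega
  · have := dist_pathGraph_le_of_add_eq (u - v) (Nat.add_sub_cancel' hvu)
    rw [dist_comm] at this
    omega

end SimpleGraph

open SimpleGraph

namespace IsDistLabeling

variable {n l : ℕ} {f : Fin n → ℕ}

theorem card_fiber_pathGraph_le_two (hf : IsDistLabeling (pathGraph n) l f) (k : ℕ) :
    #{v | f v = k} ≤ 2 := by
  by_contra! h
  obtain ⟨a, ha, b, hb, c, hc, hab, hac, hbc⟩ := two_lt_card.1 h
  simp only [mem_filter, mem_univ, true_and] at ha hb hc
  have dab := hf.2 a b hab (ha.trans hb.symm)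
  have dac := hf.2 a c hac (ha.trans hc.symm)
  have dbc := hf.2 b c hbc (hb.trans hc.symm)
  rw [dist_pathGraph] at dab dac dbc
  rw [Ne, Fin.ext_iff] at hab hac hbc
  omega

theorem card_pathGraph_le (hf : IsDistLabeling (pathGraph n) l f) : n ≤ 2 * l + 1 := by
  rcases n with _ | n
  · omega
  simpa using Fintype.card_le_two_mul_add_one_of_card_fiber_le hf.apply_le
    (hf.card_fiber_zero_le_one (pathGraph_connected n))
    fun k _ ↦ hf.card_fiber_pathGraph_le_two k

end IsDistLabeling

/-- Positions `j` and `m - j` (for `j ≤ m`), and `j` and `3m + 1 - j` (for `j > m`), carry the same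
label, where `m = n / 2`. -/
def pathLabel (n j : ℕ) : ℕ :=
  if j ≤ n / 2 then ((n / 2 : ℤ) - 2 * j).natAbs else (3 * (n / 2 : ℤ) + 1 - 2 * j).natAbs

theorem pathLabel_le {n j : ℕ} (hj : j < n) : pathLabel n j ≤ n / 2 := by
  unfold pathLabel
  split_ifs <;> omega

theorem exists_pathLabel_eq {n k : ℕ} (hk : 1 ≤ k) (hkn : k ≤ n / 2) :
    ∃ j < n, pathLabel n j = k := by
  unfold pathLabel
  by_cases hpar : k % 2 = n / 2 % 2
  · exact ⟨(n / 2 - k) / 2, by omega, by rw [if_pos (by omega)]; omega⟩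
  · exact ⟨(3 * (n / 2) + 1 - k) / 2, by omega, by rw [if_neg (by omega)]; omega⟩

theorem natAbs_sub_eq_of_pathLabel_eq {n i j : ℕ} (hj : j < n) (hij : i ≠ j)
    (h : pathLabel n i = pathLabel n j) : ((i : ℤ) - j).natAbs = pathLabel n i := by
  unfold pathLabel at h ⊢
  split_ifs at h ⊢ <;> omega

theorem isDistLabeling_pathLabel (n : ℕ) :
    IsDistLabeling (pathGraph n) (n / 2) fun v : Fin n ↦ pathLabel n v := by
  refine ⟨range_eq_Icc_zero_or_Icc_one (fun v ↦ pathLabel_le v.isLt) fun k hk hkn ↦ ?_,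
    fun u v huv h ↦ ?_⟩
  · obtain ⟨j, hj, hjk⟩ := exists_pathLabel_eq hk hkn
    exact ⟨⟨j, hj⟩, hjk⟩
  · rw [dist_pathGraph]
    exact natAbs_sub_eq_of_pathLabel_eq v.isLt (Fin.val_ne_of_ne huv) h

theorem labelingLength_pathGraph_general (n : ℕ) :
    labelingLength (SimpleGraph.pathGraph n) = n / 2 := by
  refine IsLeast.csInf_eq ⟨⟨_, isDistLabeling_pathLabel n⟩, ?_⟩
  rintro l ⟨f, hf⟩
  have := hf.card_pathGraph_le
  omega

theorem labelingLength_pathGraph (n : ℕ) (hn : 2 ≤ n) :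
    labelingLength (SimpleGraph.pathGraph n) = n / 2 :=
  labelingLength_pathGraph_general n
end

section
/- For every integer n ≥ 2 with n ≢ 4 (mod 8) and n ≢ 6 (mod 8), the path P_n on n vertices admits a proper distance ⌊n/2⌋-labeling. -/
/-- A distance `l`-labeling is proper if every label `k ∈ {1,…,l}` is used by at least two
vertices. -/
def IsProperDistLabeling {V : Type*} (G : SimpleGraph V) (l : ℕ) (f : V → ℕ) : Prop :=
  IsDistLabeling G l f ∧
    ∀ k : ℕ, 1 ≤ k → k ≤ l → ∃ u v : V, u ≠ v ∧ f u = k ∧ f v = k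

namespace PDLaux

lemma walk_exists {n : ℕ} (d : ℕ) : ∀ (u v : Fin n), v.val = u.val + d →
    ∃ w : (SimpleGraph.pathGraph n).Walk u v, w.length = d := by
  induction d with
  | zero =>
    intro u v h
    have : u = v := Fin.ext (by omega)
    subst this
    exact ⟨SimpleGraph.Walk.nil, rfl⟩
  | succ d ih =>
    intro u v h
    have hu1 : u.val + 1 < n := by
      have := v.isLt; omega
    let u' : Fin n := ⟨u.val + 1, hu1⟩
    have hadj : (SimpleGraph.pathGraph n).Adj u u' := by
      rw [SimpleGraph.pathGraph_adj]; left; rfl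
    obtain ⟨w, hw⟩ := ih u' v (by simp [u']; omega)
    exact ⟨SimpleGraph.Walk.cons hadj w, by simp [hw]⟩

lemma walk_length_ge {n : ℕ} {u v : Fin n} (w : (SimpleGraph.pathGraph n).Walk u v) :
    v.val - u.val ≤ w.length ∧ u.val - v.val ≤ w.length := by
  induction w with
  | nil => simp
  | cons h p ih =>
    rw [SimpleGraph.pathGraph_adj] at h
    rw [SimpleGraph.Walk.length_cons]
    omega

lemma pathGraph_dist {n : ℕ} (u v : Fin n) (h : u.val ≤ v.val) :
    (SimpleGraph.pathGraph n).dist u v = v.val - u.val := by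
  obtain ⟨w, hw⟩ := walk_exists (v.val - u.val) u v (by omega)
  have h1 : (SimpleGraph.pathGraph n).dist u v ≤ v.val - u.val := by
    simpa [hw] using SimpleGraph.dist_le w
  have hr : (SimpleGraph.pathGraph n).Reachable u v := ⟨w⟩
  obtain ⟨p, hp⟩ := hr.exists_walk_length_eq_dist
  have h2 := (walk_length_ge p).1
  omega

lemma bridgeEven (n l : ℕ) (f a : ℕ → ℕ) (hn : n = 2 * l) (hl : 1 ≤ l)
    (h1 : ∀ d, 1 ≤ d → d ≤ l → a d + d < n ∧ f (a d) = d ∧ f (a d + d) = d)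
    (h2 : ∀ x, x < n → 1 ≤ f x ∧ f x ≤ l ∧ (x = a (f x) ∨ x = a (f x) + f x)) :
    IsProperDistLabeling (SimpleGraph.pathGraph n) l (fun v => f v.val) := by
  refine ⟨⟨Or.inr ?_, ?_⟩, ?_⟩
  · ext m
    simp only [Set.mem_range, Set.mem_Icc]
    constructor
    · rintro ⟨x, rfl⟩
      exact ⟨(h2 x.val x.isLt).1, (h2 x.val x.isLt).2.1⟩
    · rintro ⟨hm1, hm2⟩
      obtain ⟨hlt, hf1, _⟩ := h1 m hm1 hm2
      exact ⟨⟨a m, by omega⟩, hf1⟩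
  · intro u v huv hfu
    replace hfu : f u.val = f v.val := hfu
    show (SimpleGraph.pathGraph n).dist u v = f u.val
    have hu := h2 u.val u.isLt
    have hv := h2 v.val v.isLt
    rw [← hfu] at hv
    have hne : u.val ≠ v.val := fun h => huv (Fin.ext h)
    obtain ⟨hk1, hk2, hu3⟩ := hu
    obtain ⟨_, _, hv3⟩ := hv
    rcases le_total u.val v.val with hle | hle
    · rw [pathGraph_dist u v hle]; omega
    · rw [SimpleGraph.dist_comm, pathGraph_dist v u hle]; omega
  · intro k hk1 hk2
    obtain ⟨hlt, hf1, hf2⟩ := h1 k hk1 hk2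
    refine ⟨⟨a k, by omega⟩, ⟨a k + k, hlt⟩, ?_, by simpa using hf1, by simpa using hf2⟩
    simp only [ne_eq, Fin.mk.injEq]
    omega

lemma bridgeOdd (n l z : ℕ) (f a : ℕ → ℕ) (hn : n = 2 * l + 1) (hz : z < n) (hfz : f z = 0)
    (h1 : ∀ d, 1 ≤ d → d ≤ l → a d + d < n ∧ f (a d) = d ∧ f (a d + d) = d)
    (h2 : ∀ x, x < n → x = z ∨ (1 ≤ f x ∧ f x ≤ l ∧ (x = a (f x) ∨ x = a (f x) + f x))) :
    IsProperDistLabeling (SimpleGraph.pathGraph n) l (fun v => f v.val) := by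
  refine ⟨⟨Or.inl ?_, ?_⟩, ?_⟩
  · ext m
    simp only [Set.mem_range, Set.mem_Icc]
    constructor
    · rintro ⟨x, rfl⟩
      rcases h2 x.val x.isLt with h | h
      · rw [h, hfz]; omega
      · exact ⟨by omega, h.2.1⟩
    · rintro ⟨_, hm2⟩
      rcases Nat.eq_zero_or_pos m with rfl | hm1
      · exact ⟨⟨z, hz⟩, hfz⟩
      · obtain ⟨hlt, hf1, _⟩ := h1 m hm1 hm2
        exact ⟨⟨a m, by omega⟩, hf1⟩
  · intro u v huv hfu
    replace hfu : f u.val = f v.val := hfu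
    show (SimpleGraph.pathGraph n).dist u v = f u.val
    have hu := h2 u.val u.isLt
    have hv := h2 v.val v.isLt
    rw [← hfu] at hv
    have hne : u.val ≠ v.val := fun h => huv (Fin.ext h)
    rcases hu with hu | ⟨hk1, hk2, hu3⟩ <;> rcases hv with hv | ⟨hk1p, hk2p, hv3⟩
    · exact absurd (Fin.ext (hu.trans hv.symm)) huv
    · have h0 : f u.val = 0 := by rw [hu, hfz]
      omega
    · have h0 : f u.val = 0 := by rw [hfu, hv, hfz]
      omega
    · rcases le_total u.val v.val with hle | hle
      · rw [pathGraph_dist u v hle]; omega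
      · rw [SimpleGraph.dist_comm, pathGraph_dist v u hle]; omega
  · intro k hk1 hk2
    obtain ⟨hlt, hf1, hf2⟩ := h1 k hk1 hk2
    refine ⟨⟨a k, by omega⟩, ⟨a k + k, hlt⟩, ?_, by simpa using hf1, by simpa using hf2⟩
    simp only [ne_eq, Fin.mk.injEq]
    omega

def fOdd (l x : ℕ) : ℕ :=
  if x < l - l / 2 then 2 * (l - l / 2) - (2 * x + 1)
  else if x < 2 * (l - l / 2) then (2 * x + 1) - 2 * (l - l / 2)
  else if x < (l - l / 2) + l then 2 * ((l - l / 2) + l) - 2 * x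
  else 2 * x - 2 * ((l - l / 2) + l)

lemma fOdd_spec (l x : ℕ) :
      ((x < l - l / 2) → fOdd l x = 2 * (l - l / 2) - (2 * x + 1)) ∧
      (¬(x < l - l / 2) ∧ (x < 2 * (l - l / 2)) → fOdd l x = (2 * x + 1) - 2 * (l - l / 2)) ∧
      (¬(x < l - l / 2) ∧ ¬(x < 2 * (l - l / 2)) ∧ (x < (l - l / 2) + l) → fOdd l x = 2 * ((l - l / 2) + l) - 2 * x) ∧
      (¬(x < l - l / 2) ∧ ¬(x < 2 * (l - l / 2)) ∧ ¬(x < (l - l / 2) + l) → fOdd l x = 2 * x - 2 * ((l - l / 2) + l)) := by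
  refine ⟨?_, ?_, ?_, ?_⟩
  · intro h0
    rw [fOdd.eq_def, if_pos h0]
  · rintro ⟨h0, h1⟩
    rw [fOdd.eq_def, if_neg h0, if_pos h1]
  · rintro ⟨h0, h1, h2⟩
    rw [fOdd.eq_def, if_neg h0, if_neg h1, if_pos h2]
  · rintro ⟨h0, h1, h2⟩
    rw [fOdd.eq_def, if_neg h0, if_neg h1, if_neg h2]

def aOdd (l d : ℕ) : ℕ :=
  if d % 2 = 1 then (l - l / 2) - (d + 1) / 2
  else ((l - l / 2) + l) - d / 2

lemma aOdd_spec (l d : ℕ) :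
      ((d % 2 = 1) → aOdd l d = (l - l / 2) - (d + 1) / 2) ∧
      (¬(d % 2 = 1) → aOdd l d = ((l - l / 2) + l) - d / 2) := by
  refine ⟨?_, ?_⟩
  · intro h0
    rw [aOdd.eq_def, if_pos h0]
  · intro h0
    rw [aOdd.eq_def, if_neg h0]

def f8 (k x : ℕ) : ℕ :=
  if x + 1 ≤ 2 * k then
    (if (x + 1) % 2 = 1 then 4 * k - 2 * (x + 1) else 4 * k + 4 - 2 * (x + 1))
  else if x + 1 = 2 * k + 2 then 4 * k - 1
  else if x + 1 ≤ 4 * k - 1 then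
    (if (x + 1) % 2 = 1 then 2 * (x + 1) - 4 * k else 2 * (x + 1) - (4 * k + 4))
  else if x + 1 = 4 * k + 1 then 2 * k - 1
  else if x + 1 ≤ 4 * k + 2 then 2 * (x + 1) - (4 * k + 4)
  else if x + 1 ≤ 5 * k + 1 then 12 * k + 3 - 2 * (x + 1)
  else if x + 1 ≤ 6 * k - 1 then 12 * k + 1 - 2 * (x + 1)
  else if x + 1 = 6 * k then 2 * k - 1
  else if x + 1 = 6 * k + 1 then 4 * k - 1
  else if x + 1 ≤ 7 * k - 1 then 2 * (x + 1) - (12 * k + 1)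
  else if x + 1 ≤ 7 * k + 1 then 1
  else 2 * (x + 1) - (12 * k + 3)

lemma f8_spec (k x : ℕ) :
      ((x + 1 ≤ 2 * k) ∧ ((x + 1) % 2 = 1) → f8 k x = 4 * k - 2 * (x + 1)) ∧
      ((x + 1 ≤ 2 * k) ∧ ¬((x + 1) % 2 = 1) → f8 k x = 4 * k + 4 - 2 * (x + 1)) ∧
      (¬(x + 1 ≤ 2 * k) ∧ (x + 1 = 2 * k + 2) → f8 k x = 4 * k - 1) ∧
      (¬(x + 1 ≤ 2 * k) ∧ ¬(x + 1 = 2 * k + 2) ∧ (x + 1 ≤ 4 * k - 1) ∧ ((x + 1) % 2 = 1) → f8 k x = 2 * (x + 1) - 4 * k) ∧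
      (¬(x + 1 ≤ 2 * k) ∧ ¬(x + 1 = 2 * k + 2) ∧ (x + 1 ≤ 4 * k - 1) ∧ ¬((x + 1) % 2 = 1) → f8 k x = 2 * (x + 1) - (4 * k + 4)) ∧
      (¬(x + 1 ≤ 2 * k) ∧ ¬(x + 1 = 2 * k + 2) ∧ ¬(x + 1 ≤ 4 * k - 1) ∧ (x + 1 = 4 * k + 1) → f8 k x = 2 * k - 1) ∧
      (¬(x + 1 ≤ 2 * k) ∧ ¬(x + 1 = 2 * k + 2) ∧ ¬(x + 1 ≤ 4 * k - 1) ∧ ¬(x + 1 = 4 * k + 1) ∧ (x + 1 ≤ 4 * k + 2) → f8 k x = 2 * (x + 1) - (4 * k + 4)) ∧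
      (¬(x + 1 ≤ 2 * k) ∧ ¬(x + 1 = 2 * k + 2) ∧ ¬(x + 1 ≤ 4 * k - 1) ∧ ¬(x + 1 = 4 * k + 1) ∧ ¬(x + 1 ≤ 4 * k + 2) ∧ (x + 1 ≤ 5 * k + 1) → f8 k x = 12 * k + 3 - 2 * (x + 1)) ∧
      (¬(x + 1 ≤ 2 * k) ∧ ¬(x + 1 = 2 * k + 2) ∧ ¬(x + 1 ≤ 4 * k - 1) ∧ ¬(x + 1 = 4 * k + 1) ∧ ¬(x + 1 ≤ 4 * k + 2) ∧ ¬(x + 1 ≤ 5 * k + 1) ∧ (x + 1 ≤ 6 * k - 1) → f8 k x = 12 * k + 1 - 2 * (x + 1)) ∧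
      (¬(x + 1 ≤ 2 * k) ∧ ¬(x + 1 = 2 * k + 2) ∧ ¬(x + 1 ≤ 4 * k - 1) ∧ ¬(x + 1 = 4 * k + 1) ∧ ¬(x + 1 ≤ 4 * k + 2) ∧ ¬(x + 1 ≤ 5 * k + 1) ∧ ¬(x + 1 ≤ 6 * k - 1) ∧ (x + 1 = 6 * k) → f8 k x = 2 * k - 1) ∧
      (¬(x + 1 ≤ 2 * k) ∧ ¬(x + 1 = 2 * k + 2) ∧ ¬(x + 1 ≤ 4 * k - 1) ∧ ¬(x + 1 = 4 * k + 1) ∧ ¬(x + 1 ≤ 4 * k + 2) ∧ ¬(x + 1 ≤ 5 * k + 1) ∧ ¬(x + 1 ≤ 6 * k - 1) ∧ ¬(x + 1 = 6 * k) ∧ (x + 1 = 6 * k + 1) → f8 k x = 4 * k - 1) ∧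
      (¬(x + 1 ≤ 2 * k) ∧ ¬(x + 1 = 2 * k + 2) ∧ ¬(x + 1 ≤ 4 * k - 1) ∧ ¬(x + 1 = 4 * k + 1) ∧ ¬(x + 1 ≤ 4 * k + 2) ∧ ¬(x + 1 ≤ 5 * k + 1) ∧ ¬(x + 1 ≤ 6 * k - 1) ∧ ¬(x + 1 = 6 * k) ∧ ¬(x + 1 = 6 * k + 1) ∧ (x + 1 ≤ 7 * k - 1) → f8 k x = 2 * (x + 1) - (12 * k + 1)) ∧
      (¬(x + 1 ≤ 2 * k) ∧ ¬(x + 1 = 2 * k + 2) ∧ ¬(x + 1 ≤ 4 * k - 1) ∧ ¬(x + 1 = 4 * k + 1) ∧ ¬(x + 1 ≤ 4 * k + 2) ∧ ¬(x + 1 ≤ 5 * k + 1) ∧ ¬(x + 1 ≤ 6 * k - 1) ∧ ¬(x + 1 = 6 * k) ∧ ¬(x + 1 = 6 * k + 1) ∧ ¬(x + 1 ≤ 7 * k - 1) ∧ (x + 1 ≤ 7 * k + 1) → f8 k x = 1) ∧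
      (¬(x + 1 ≤ 2 * k) ∧ ¬(x + 1 = 2 * k + 2) ∧ ¬(x + 1 ≤ 4 * k - 1) ∧ ¬(x + 1 = 4 * k + 1) ∧ ¬(x + 1 ≤ 4 * k + 2) ∧ ¬(x + 1 ≤ 5 * k + 1) ∧ ¬(x + 1 ≤ 6 * k - 1) ∧ ¬(x + 1 = 6 * k) ∧ ¬(x + 1 = 6 * k + 1) ∧ ¬(x + 1 ≤ 7 * k - 1) ∧ ¬(x + 1 ≤ 7 * k + 1) → f8 k x = 2 * (x + 1) - (12 * k + 3)) := by
  refine ⟨?_, ?_, ?_, ?_, ?_, ?_, ?_, ?_, ?_, ?_, ?_, ?_, ?_, ?_⟩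
  · rintro ⟨h0, h1⟩
    rw [f8.eq_def, if_pos h0, if_pos h1]
  · rintro ⟨h0, h1⟩
    rw [f8.eq_def, if_pos h0, if_neg h1]
  · rintro ⟨h0, h1⟩
    rw [f8.eq_def, if_neg h0, if_pos h1]
  · rintro ⟨h0, h1, h2, h3⟩
    rw [f8.eq_def, if_neg h0, if_neg h1, if_pos h2, if_pos h3]
  · rintro ⟨h0, h1, h2, h3⟩
    rw [f8.eq_def, if_neg h0, if_neg h1, if_pos h2, if_neg h3]
  · rintro ⟨h0, h1, h2, h3⟩
    rw [f8.eq_def, if_neg h0, if_neg h1, if_neg h2, if_pos h3]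
  · rintro ⟨h0, h1, h2, h3, h4⟩
    rw [f8.eq_def, if_neg h0, if_neg h1, if_neg h2, if_neg h3, if_pos h4]
  · rintro ⟨h0, h1, h2, h3, h4, h5⟩
    rw [f8.eq_def, if_neg h0, if_neg h1, if_neg h2, if_neg h3, if_neg h4, if_pos h5]
  · rintro ⟨h0, h1, h2, h3, h4, h5, h6⟩
    rw [f8.eq_def, if_neg h0, if_neg h1, if_neg h2, if_neg h3, if_neg h4, if_neg h5, if_pos h6]
  · rintro ⟨h0, h1, h2, h3, h4, h5, h6, h7⟩
    rw [f8.eq_def, if_neg h0, if_neg h1, if_neg h2, if_neg h3, if_neg h4, if_neg h5, if_neg h6, if_pos h7]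
  · rintro ⟨h0, h1, h2, h3, h4, h5, h6, h7, h8⟩
    rw [f8.eq_def, if_neg h0, if_neg h1, if_neg h2, if_neg h3, if_neg h4, if_neg h5, if_neg h6, if_neg h7, if_pos h8]
  · rintro ⟨h0, h1, h2, h3, h4, h5, h6, h7, h8, h9⟩
    rw [f8.eq_def, if_neg h0, if_neg h1, if_neg h2, if_neg h3, if_neg h4, if_neg h5, if_neg h6, if_neg h7, if_neg h8, if_pos h9]
  · rintro ⟨h0, h1, h2, h3, h4, h5, h6, h7, h8, h9, h10⟩
    rw [f8.eq_def, if_neg h0, if_neg h1, if_neg h2, if_neg h3, if_neg h4, if_neg h5, if_neg h6, if_neg h7, if_neg h8, if_neg h9, if_pos h10]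
  · rintro ⟨h0, h1, h2, h3, h4, h5, h6, h7, h8, h9, h10⟩
    rw [f8.eq_def, if_neg h0, if_neg h1, if_neg h2, if_neg h3, if_neg h4, if_neg h5, if_neg h6, if_neg h7, if_neg h8, if_neg h9, if_neg h10]

def a8 (k d : ℕ) : ℕ :=
  if d % 4 = 2 then 2 * k - d / 2 - 1
  else if d % 2 = 0 then 2 * k + 2 - d / 2 - 1
  else if d = 1 then 7 * k - 1
  else if d ≤ 2 * k - 3 then 5 * k + 1 + (2 * k - 3 - d) / 2
  else if d = 2 * k - 1 then 4 * k
  else if d ≤ 4 * k - 3 then 4 * k + 1 + (4 * k - 1 - d) / 2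
  else 2 * k + 1

lemma a8_spec (k d : ℕ) :
      ((d % 4 = 2) → a8 k d = 2 * k - d / 2 - 1) ∧
      (¬(d % 4 = 2) ∧ (d % 2 = 0) → a8 k d = 2 * k + 2 - d / 2 - 1) ∧
      (¬(d % 4 = 2) ∧ ¬(d % 2 = 0) ∧ (d = 1) → a8 k d = 7 * k - 1) ∧
      (¬(d % 4 = 2) ∧ ¬(d % 2 = 0) ∧ ¬(d = 1) ∧ (d ≤ 2 * k - 3) → a8 k d = 5 * k + 1 + (2 * k - 3 - d) / 2) ∧
      (¬(d % 4 = 2) ∧ ¬(d % 2 = 0) ∧ ¬(d = 1) ∧ ¬(d ≤ 2 * k - 3) ∧ (d = 2 * k - 1) → a8 k d = 4 * k) ∧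
      (¬(d % 4 = 2) ∧ ¬(d % 2 = 0) ∧ ¬(d = 1) ∧ ¬(d ≤ 2 * k - 3) ∧ ¬(d = 2 * k - 1) ∧ (d ≤ 4 * k - 3) → a8 k d = 4 * k + 1 + (4 * k - 1 - d) / 2) ∧
      (¬(d % 4 = 2) ∧ ¬(d % 2 = 0) ∧ ¬(d = 1) ∧ ¬(d ≤ 2 * k - 3) ∧ ¬(d = 2 * k - 1) ∧ ¬(d ≤ 4 * k - 3) → a8 k d = 2 * k + 1) := by
  refine ⟨?_, ?_, ?_, ?_, ?_, ?_, ?_⟩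
  · intro h0
    rw [a8.eq_def, if_pos h0]
  · rintro ⟨h0, h1⟩
    rw [a8.eq_def, if_neg h0, if_pos h1]
  · rintro ⟨h0, h1, h2⟩
    rw [a8.eq_def, if_neg h0, if_neg h1, if_pos h2]
  · rintro ⟨h0, h1, h2, h3⟩
    rw [a8.eq_def, if_neg h0, if_neg h1, if_neg h2, if_pos h3]
  · rintro ⟨h0, h1, h2, h3, h4⟩
    rw [a8.eq_def, if_neg h0, if_neg h1, if_neg h2, if_neg h3, if_pos h4]
  · rintro ⟨h0, h1, h2, h3, h4, h5⟩
    rw [a8.eq_def, if_neg h0, if_neg h1, if_neg h2, if_neg h3, if_neg h4, if_pos h5]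
  · rintro ⟨h0, h1, h2, h3, h4, h5⟩
    rw [a8.eq_def, if_neg h0, if_neg h1, if_neg h2, if_neg h3, if_neg h4, if_neg h5]

def f82 (k x : ℕ) : ℕ :=
  if x + 1 ≤ 2 * k then
    (if (x + 1) % 2 = 1 then 4 * k - 2 * (x + 1) else 4 * k + 4 - 2 * (x + 1))
  else if x + 1 = 2 * k + 2 then 4 * k + 1
  else if x + 1 ≤ 4 * k - 1 then
    (if (x + 1) % 2 = 1 then 2 * (x + 1) - 4 * k else 2 * (x + 1) - (4 * k + 4))
  else if x + 1 = 4 * k + 1 then 2 * k + 3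
  else if x + 1 ≤ 4 * k + 2 then 2 * (x + 1) - (4 * k + 4)
  else if x + 1 ≤ 5 * k then 12 * k + 5 - 2 * (x + 1)
  else if x + 1 ≤ 5 * k + 2 then 1
  else if x + 1 ≤ 6 * k + 2 then 12 * k + 7 - 2 * (x + 1)
  else if x + 1 = 6 * k + 3 then 4 * k + 1
  else if x + 1 = 6 * k + 4 then 2 * k + 3
  else if x + 1 ≤ 7 * k + 4 then 2 * (x + 1) - (12 * k + 7)
  else 2 * (x + 1) - (12 * k + 5)

lemma f82_spec (k x : ℕ) :
      ((x + 1 ≤ 2 * k) ∧ ((x + 1) % 2 = 1) → f82 k x = 4 * k - 2 * (x + 1)) ∧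
      ((x + 1 ≤ 2 * k) ∧ ¬((x + 1) % 2 = 1) → f82 k x = 4 * k + 4 - 2 * (x + 1)) ∧
      (¬(x + 1 ≤ 2 * k) ∧ (x + 1 = 2 * k + 2) → f82 k x = 4 * k + 1) ∧
      (¬(x + 1 ≤ 2 * k) ∧ ¬(x + 1 = 2 * k + 2) ∧ (x + 1 ≤ 4 * k - 1) ∧ ((x + 1) % 2 = 1) → f82 k x = 2 * (x + 1) - 4 * k) ∧
      (¬(x + 1 ≤ 2 * k) ∧ ¬(x + 1 = 2 * k + 2) ∧ (x + 1 ≤ 4 * k - 1) ∧ ¬((x + 1) % 2 = 1) → f82 k x = 2 * (x + 1) - (4 * k + 4)) ∧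
      (¬(x + 1 ≤ 2 * k) ∧ ¬(x + 1 = 2 * k + 2) ∧ ¬(x + 1 ≤ 4 * k - 1) ∧ (x + 1 = 4 * k + 1) → f82 k x = 2 * k + 3) ∧
      (¬(x + 1 ≤ 2 * k) ∧ ¬(x + 1 = 2 * k + 2) ∧ ¬(x + 1 ≤ 4 * k - 1) ∧ ¬(x + 1 = 4 * k + 1) ∧ (x + 1 ≤ 4 * k + 2) → f82 k x = 2 * (x + 1) - (4 * k + 4)) ∧
      (¬(x + 1 ≤ 2 * k) ∧ ¬(x + 1 = 2 * k + 2) ∧ ¬(x + 1 ≤ 4 * k - 1) ∧ ¬(x + 1 = 4 * k + 1) ∧ ¬(x + 1 ≤ 4 * k + 2) ∧ (x + 1 ≤ 5 * k) → f82 k x = 12 * k + 5 - 2 * (x + 1)) ∧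
      (¬(x + 1 ≤ 2 * k) ∧ ¬(x + 1 = 2 * k + 2) ∧ ¬(x + 1 ≤ 4 * k - 1) ∧ ¬(x + 1 = 4 * k + 1) ∧ ¬(x + 1 ≤ 4 * k + 2) ∧ ¬(x + 1 ≤ 5 * k) ∧ (x + 1 ≤ 5 * k + 2) → f82 k x = 1) ∧
      (¬(x + 1 ≤ 2 * k) ∧ ¬(x + 1 = 2 * k + 2) ∧ ¬(x + 1 ≤ 4 * k - 1) ∧ ¬(x + 1 = 4 * k + 1) ∧ ¬(x + 1 ≤ 4 * k + 2) ∧ ¬(x + 1 ≤ 5 * k) ∧ ¬(x + 1 ≤ 5 * k + 2) ∧ (x + 1 ≤ 6 * k + 2) → f82 k x = 12 * k + 7 - 2 * (x + 1)) ∧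
      (¬(x + 1 ≤ 2 * k) ∧ ¬(x + 1 = 2 * k + 2) ∧ ¬(x + 1 ≤ 4 * k - 1) ∧ ¬(x + 1 = 4 * k + 1) ∧ ¬(x + 1 ≤ 4 * k + 2) ∧ ¬(x + 1 ≤ 5 * k) ∧ ¬(x + 1 ≤ 5 * k + 2) ∧ ¬(x + 1 ≤ 6 * k + 2) ∧ (x + 1 = 6 * k + 3) → f82 k x = 4 * k + 1) ∧
      (¬(x + 1 ≤ 2 * k) ∧ ¬(x + 1 = 2 * k + 2) ∧ ¬(x + 1 ≤ 4 * k - 1) ∧ ¬(x + 1 = 4 * k + 1) ∧ ¬(x + 1 ≤ 4 * k + 2) ∧ ¬(x + 1 ≤ 5 * k) ∧ ¬(x + 1 ≤ 5 * k + 2) ∧ ¬(x + 1 ≤ 6 * k + 2) ∧ ¬(x + 1 = 6 * k + 3) ∧ (x + 1 = 6 * k + 4) → f82 k x = 2 * k + 3) ∧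
      (¬(x + 1 ≤ 2 * k) ∧ ¬(x + 1 = 2 * k + 2) ∧ ¬(x + 1 ≤ 4 * k - 1) ∧ ¬(x + 1 = 4 * k + 1) ∧ ¬(x + 1 ≤ 4 * k + 2) ∧ ¬(x + 1 ≤ 5 * k) ∧ ¬(x + 1 ≤ 5 * k + 2) ∧ ¬(x + 1 ≤ 6 * k + 2) ∧ ¬(x + 1 = 6 * k + 3) ∧ ¬(x + 1 = 6 * k + 4) ∧ (x + 1 ≤ 7 * k + 4) → f82 k x = 2 * (x + 1) - (12 * k + 7)) ∧
      (¬(x + 1 ≤ 2 * k) ∧ ¬(x + 1 = 2 * k + 2) ∧ ¬(x + 1 ≤ 4 * k - 1) ∧ ¬(x + 1 = 4 * k + 1) ∧ ¬(x + 1 ≤ 4 * k + 2) ∧ ¬(x + 1 ≤ 5 * k) ∧ ¬(x + 1 ≤ 5 * k + 2) ∧ ¬(x + 1 ≤ 6 * k + 2) ∧ ¬(x + 1 = 6 * k + 3) ∧ ¬(x + 1 = 6 * k + 4) ∧ ¬(x + 1 ≤ 7 * k + 4) → f82 k x = 2 * (x + 1) - (12 * k + 5)) := by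
  refine ⟨?_, ?_, ?_, ?_, ?_, ?_, ?_, ?_, ?_, ?_, ?_, ?_, ?_, ?_⟩
  · rintro ⟨h0, h1⟩
    rw [f82.eq_def, if_pos h0, if_pos h1]
  · rintro ⟨h0, h1⟩
    rw [f82.eq_def, if_pos h0, if_neg h1]
  · rintro ⟨h0, h1⟩
    rw [f82.eq_def, if_neg h0, if_pos h1]
  · rintro ⟨h0, h1, h2, h3⟩
    rw [f82.eq_def, if_neg h0, if_neg h1, if_pos h2, if_pos h3]
  · rintro ⟨h0, h1, h2, h3⟩
    rw [f82.eq_def, if_neg h0, if_neg h1, if_pos h2, if_neg h3]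
  · rintro ⟨h0, h1, h2, h3⟩
    rw [f82.eq_def, if_neg h0, if_neg h1, if_neg h2, if_pos h3]
  · rintro ⟨h0, h1, h2, h3, h4⟩
    rw [f82.eq_def, if_neg h0, if_neg h1, if_neg h2, if_neg h3, if_pos h4]
  · rintro ⟨h0, h1, h2, h3, h4, h5⟩
    rw [f82.eq_def, if_neg h0, if_neg h1, if_neg h2, if_neg h3, if_neg h4, if_pos h5]
  · rintro ⟨h0, h1, h2, h3, h4, h5, h6⟩
    rw [f82.eq_def, if_neg h0, if_neg h1, if_neg h2, if_neg h3, if_neg h4, if_neg h5, if_pos h6]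
  · rintro ⟨h0, h1, h2, h3, h4, h5, h6, h7⟩
    rw [f82.eq_def, if_neg h0, if_neg h1, if_neg h2, if_neg h3, if_neg h4, if_neg h5, if_neg h6, if_pos h7]
  · rintro ⟨h0, h1, h2, h3, h4, h5, h6, h7, h8⟩
    rw [f82.eq_def, if_neg h0, if_neg h1, if_neg h2, if_neg h3, if_neg h4, if_neg h5, if_neg h6, if_neg h7, if_pos h8]
  · rintro ⟨h0, h1, h2, h3, h4, h5, h6, h7, h8, h9⟩
    rw [f82.eq_def, if_neg h0, if_neg h1, if_neg h2, if_neg h3, if_neg h4, if_neg h5, if_neg h6, if_neg h7, if_neg h8, if_pos h9]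
  · rintro ⟨h0, h1, h2, h3, h4, h5, h6, h7, h8, h9, h10⟩
    rw [f82.eq_def, if_neg h0, if_neg h1, if_neg h2, if_neg h3, if_neg h4, if_neg h5, if_neg h6, if_neg h7, if_neg h8, if_neg h9, if_pos h10]
  · rintro ⟨h0, h1, h2, h3, h4, h5, h6, h7, h8, h9, h10⟩
    rw [f82.eq_def, if_neg h0, if_neg h1, if_neg h2, if_neg h3, if_neg h4, if_neg h5, if_neg h6, if_neg h7, if_neg h8, if_neg h9, if_neg h10]

def a82 (k d : ℕ) : ℕ :=
  if d % 4 = 2 then 2 * k - d / 2 - 1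
  else if d % 2 = 0 then 2 * k + 2 - d / 2 - 1
  else if d = 1 then 5 * k
  else if d ≤ 2 * k + 1 then 5 * k + 2 + (2 * k + 1 - d) / 2
  else if d = 2 * k + 3 then 4 * k
  else if d ≤ 4 * k - 1 then 4 * k + 1 + (4 * k + 1 - d) / 2
  else 2 * k + 1

lemma a82_spec (k d : ℕ) :
      ((d % 4 = 2) → a82 k d = 2 * k - d / 2 - 1) ∧
      (¬(d % 4 = 2) ∧ (d % 2 = 0) → a82 k d = 2 * k + 2 - d / 2 - 1) ∧
      (¬(d % 4 = 2) ∧ ¬(d % 2 = 0) ∧ (d = 1) → a82 k d = 5 * k) ∧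
      (¬(d % 4 = 2) ∧ ¬(d % 2 = 0) ∧ ¬(d = 1) ∧ (d ≤ 2 * k + 1) → a82 k d = 5 * k + 2 + (2 * k + 1 - d) / 2) ∧
      (¬(d % 4 = 2) ∧ ¬(d % 2 = 0) ∧ ¬(d = 1) ∧ ¬(d ≤ 2 * k + 1) ∧ (d = 2 * k + 3) → a82 k d = 4 * k) ∧
      (¬(d % 4 = 2) ∧ ¬(d % 2 = 0) ∧ ¬(d = 1) ∧ ¬(d ≤ 2 * k + 1) ∧ ¬(d = 2 * k + 3) ∧ (d ≤ 4 * k - 1) → a82 k d = 4 * k + 1 + (4 * k + 1 - d) / 2) ∧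
      (¬(d % 4 = 2) ∧ ¬(d % 2 = 0) ∧ ¬(d = 1) ∧ ¬(d ≤ 2 * k + 1) ∧ ¬(d = 2 * k + 3) ∧ ¬(d ≤ 4 * k - 1) → a82 k d = 2 * k + 1) := by
  refine ⟨?_, ?_, ?_, ?_, ?_, ?_, ?_⟩
  · intro h0
    rw [a82.eq_def, if_pos h0]
  · rintro ⟨h0, h1⟩
    rw [a82.eq_def, if_neg h0, if_pos h1]
  · rintro ⟨h0, h1, h2⟩
    rw [a82.eq_def, if_neg h0, if_neg h1, if_pos h2]
  · rintro ⟨h0, h1, h2, h3⟩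
    rw [a82.eq_def, if_neg h0, if_neg h1, if_neg h2, if_pos h3]
  · rintro ⟨h0, h1, h2, h3, h4⟩
    rw [a82.eq_def, if_neg h0, if_neg h1, if_neg h2, if_neg h3, if_pos h4]
  · rintro ⟨h0, h1, h2, h3, h4, h5⟩
    rw [a82.eq_def, if_neg h0, if_neg h1, if_neg h2, if_neg h3, if_neg h4, if_pos h5]
  · rintro ⟨h0, h1, h2, h3, h4, h5⟩
    rw [a82.eq_def, if_neg h0, if_neg h1, if_neg h2, if_neg h3, if_neg h4, if_neg h5]

lemma hOdd1 (l : ℕ) : ∀ d, 1 ≤ d → d ≤ l →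
    aOdd l d + d < 2 * l + 1 ∧ fOdd l (aOdd l d) = d ∧ fOdd l (aOdd l d + d) = d := by
  intro d hd1 hd2
  obtain ⟨sa0, sa1⟩ := aOdd_spec l d
  obtain ⟨sf0, sf1, sf2, sf3⟩ := fOdd_spec l (aOdd l d)
  obtain ⟨sg0, sg1, sg2, sg3⟩ := fOdd_spec l (aOdd l d + d)
  by_cases hc0 : d % 2 = 1
  · have hA := sa0 hc0
    have hF := sf0 (by omega)
    have hG := sg1 (by omega)
    exact ⟨by omega, by omega, by omega⟩
  · have hA := sa1 hc0
    have hF := sf2 (by omega)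
    have hG := sg3 (by omega)
    exact ⟨by omega, by omega, by omega⟩

lemma hOdd2 (l : ℕ) : ∀ x, x < 2 * l + 1 → x = (l - l / 2) + l ∨
    (1 ≤ fOdd l x ∧ fOdd l x ≤ l ∧
      (x = aOdd l (fOdd l x) ∨ x = aOdd l (fOdd l x) + fOdd l x)) := by
  intro x hx
  obtain ⟨sf0, sf1, sf2, sf3⟩ := fOdd_spec l x
  obtain ⟨sa0, sa1⟩ := aOdd_spec l (fOdd l x)
  by_cases hc0 : x < l - l / 2
  · have hF := sf0 hc0
    have hA := sa0 (by omega)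
    omega
  · by_cases hc1 : x < 2 * (l - l / 2)
    · have hF := sf1 ⟨hc0, hc1⟩
      have hA := sa0 (by omega)
      omega
    · by_cases hc2 : x < (l - l / 2) + l
      · have hF := sf2 ⟨hc0, hc1, hc2⟩
        have hA := sa1 (by omega)
        omega
      · have hF := sf3 ⟨hc0, hc1, hc2⟩
        have hA := sa1 (by omega)
        omega

lemma h81 (k : ℕ) (hk : 2 ≤ k) : ∀ d, 1 ≤ d → d ≤ 4 * k →
    a8 k d + d < 8 * k ∧ f8 k (a8 k d) = d ∧ f8 k (a8 k d + d) = d := by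
  intro d hd1 hd2
  obtain ⟨sa0, sa1, sa2, sa3, sa4, sa5, sa6⟩ := a8_spec k d
  obtain ⟨sf0, sf1, sf2, sf3, sf4, sf5, sf6, sf7, sf8, sf9, sf10, sf11, sf12, sf13⟩ := f8_spec k (a8 k d)
  obtain ⟨sg0, sg1, sg2, sg3, sg4, sg5, sg6, sg7, sg8, sg9, sg10, sg11, sg12, sg13⟩ := f8_spec k (a8 k d + d)
  by_cases hc0 : d % 4 = 2
  · have hA := sa0 hc0
    have hF := sf0 (by omega)
    have hG := sg3 (by omega)
    exact ⟨by omega, by omega, by omega⟩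
  · by_cases hc1 : d % 2 = 0
    · have hA := sa1 ⟨hc0, hc1⟩
      by_cases hs : d ≤ 4 * k - 8
      · have hF := sf1 (by omega)
        have hG := sg4 (by omega)
        exact ⟨by omega, by omega, by omega⟩
      · have hF := sf1 (by omega)
        have hG := sg6 (by omega)
        exact ⟨by omega, by omega, by omega⟩
    · by_cases hc2 : d = 1
      · have hA := sa2 ⟨hc0, hc1, hc2⟩
        have hF := sf12 (by omega)
        have hG := sg12 (by omega)
        exact ⟨by omega, by omega, by omega⟩
      · by_cases hc3 : d ≤ 2 * k - 3
        · have hA := sa3 ⟨hc0, hc1, hc2, hc3⟩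
          have hF := sf8 (by omega)
          have hG := sg11 (by omega)
          exact ⟨by omega, by omega, by omega⟩
        · by_cases hc4 : d = 2 * k - 1
          · have hA := sa4 ⟨hc0, hc1, hc2, hc3, hc4⟩
            have hF := sf5 (by omega)
            have hG := sg9 (by omega)
            exact ⟨by omega, by omega, by omega⟩
          · by_cases hc5 : d ≤ 4 * k - 3
            · have hA := sa5 ⟨hc0, hc1, hc2, hc3, hc4, hc5⟩
              have hF := sf7 (by omega)
              have hG := sg13 (by omega)
              exact ⟨by omega, by omega, by omega⟩
            · have hA := sa6 ⟨hc0, hc1, hc2, hc3, hc4, hc5⟩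
              have hF := sf2 (by omega)
              have hG := sg10 (by omega)
              exact ⟨by omega, by omega, by omega⟩

lemma h82 (k : ℕ) (hk : 2 ≤ k) : ∀ x, x < 8 * k →
    1 ≤ f8 k x ∧ f8 k x ≤ 4 * k ∧
      (x = a8 k (f8 k x) ∨ x = a8 k (f8 k x) + f8 k x) := by
  intro x hx
  obtain ⟨sf0, sf1, sf2, sf3, sf4, sf5, sf6, sf7, sf8, sf9, sf10, sf11, sf12, sf13⟩ := f8_spec k x
  obtain ⟨sa0, sa1, sa2, sa3, sa4, sa5, sa6⟩ := a8_spec k (f8 k x)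
  by_cases hc0 : x + 1 ≤ 2 * k
  · by_cases hp0 : (x + 1) % 2 = 1
    · have hF := sf0 ⟨hc0, hp0⟩
      have hA := sa0 (by omega)
      omega
    · have hF := sf1 ⟨hc0, hp0⟩
      have hA := sa1 (by omega)
      omega
  · by_cases hc1 : x + 1 = 2 * k + 2
    · have hF := sf2 ⟨hc0, hc1⟩
      have hA := sa6 (by omega)
      omega
    · by_cases hc2 : x + 1 ≤ 4 * k - 1
      · by_cases hp2 : (x + 1) % 2 = 1
        · have hF := sf3 ⟨hc0, hc1, hc2, hp2⟩
          have hA := sa0 (by omega)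
          omega
        · have hF := sf4 ⟨hc0, hc1, hc2, hp2⟩
          have hA := sa1 (by omega)
          omega
      · by_cases hc3 : x + 1 = 4 * k + 1
        · have hF := sf5 ⟨hc0, hc1, hc2, hc3⟩
          have hA := sa4 (by omega)
          omega
        · by_cases hc4 : x + 1 ≤ 4 * k + 2
          · have hF := sf6 ⟨hc0, hc1, hc2, hc3, hc4⟩
            have hA := sa1 (by omega)
            omega
          · by_cases hc5 : x + 1 ≤ 5 * k + 1
            · have hF := sf7 ⟨hc0, hc1, hc2, hc3, hc4, hc5⟩
              have hA := sa5 (by omega)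
              omega
            · by_cases hc6 : x + 1 ≤ 6 * k - 1
              · have hF := sf8 ⟨hc0, hc1, hc2, hc3, hc4, hc5, hc6⟩
                have hA := sa3 (by omega)
                omega
              · by_cases hc7 : x + 1 = 6 * k
                · have hF := sf9 ⟨hc0, hc1, hc2, hc3, hc4, hc5, hc6, hc7⟩
                  have hA := sa4 (by omega)
                  omega
                · by_cases hc8 : x + 1 = 6 * k + 1
                  · have hF := sf10 ⟨hc0, hc1, hc2, hc3, hc4, hc5, hc6, hc7, hc8⟩
                    have hA := sa6 (by omega)
                    omega
                  · by_cases hc9 : x + 1 ≤ 7 * k - 1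
                    · have hF := sf11 ⟨hc0, hc1, hc2, hc3, hc4, hc5, hc6, hc7, hc8, hc9⟩
                      have hA := sa3 (by omega)
                      omega
                    · by_cases hc10 : x + 1 ≤ 7 * k + 1
                      · have hF := sf12 ⟨hc0, hc1, hc2, hc3, hc4, hc5, hc6, hc7, hc8, hc9, hc10⟩
                        have hA := sa2 (by omega)
                        omega
                      · have hF := sf13 ⟨hc0, hc1, hc2, hc3, hc4, hc5, hc6, hc7, hc8, hc9, hc10⟩
                        have hA := sa5 (by omega)
                        omega

lemma h821 (k : ℕ) (hk : 2 ≤ k) : ∀ d, 1 ≤ d → d ≤ 4 * k + 1 →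
    a82 k d + d < 8 * k + 2 ∧ f82 k (a82 k d) = d ∧ f82 k (a82 k d + d) = d := by
  intro d hd1 hd2
  obtain ⟨sa0, sa1, sa2, sa3, sa4, sa5, sa6⟩ := a82_spec k d
  obtain ⟨sf0, sf1, sf2, sf3, sf4, sf5, sf6, sf7, sf8, sf9, sf10, sf11, sf12, sf13⟩ := f82_spec k (a82 k d)
  obtain ⟨sg0, sg1, sg2, sg3, sg4, sg5, sg6, sg7, sg8, sg9, sg10, sg11, sg12, sg13⟩ := f82_spec k (a82 k d + d)
  by_cases hc0 : d % 4 = 2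
  · have hA := sa0 hc0
    have hF := sf0 (by omega)
    have hG := sg3 (by omega)
    exact ⟨by omega, by omega, by omega⟩
  · by_cases hc1 : d % 2 = 0
    · have hA := sa1 ⟨hc0, hc1⟩
      by_cases hs : d ≤ 4 * k - 8
      · have hF := sf1 (by omega)
        have hG := sg4 (by omega)
        exact ⟨by omega, by omega, by omega⟩
      · have hF := sf1 (by omega)
        have hG := sg6 (by omega)
        exact ⟨by omega, by omega, by omega⟩
    · by_cases hc2 : d = 1
      · have hA := sa2 ⟨hc0, hc1, hc2⟩
        have hF := sf8 (by omega)
        have hG := sg8 (by omega)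
        exact ⟨by omega, by omega, by omega⟩
      · by_cases hc3 : d ≤ 2 * k + 1
        · have hA := sa3 ⟨hc0, hc1, hc2, hc3⟩
          have hF := sf9 (by omega)
          have hG := sg12 (by omega)
          exact ⟨by omega, by omega, by omega⟩
        · by_cases hc4 : d = 2 * k + 3
          · have hA := sa4 ⟨hc0, hc1, hc2, hc3, hc4⟩
            have hF := sf5 (by omega)
            have hG := sg11 (by omega)
            exact ⟨by omega, by omega, by omega⟩
          · by_cases hc5 : d ≤ 4 * k - 1
            · have hA := sa5 ⟨hc0, hc1, hc2, hc3, hc4, hc5⟩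
              have hF := sf7 (by omega)
              have hG := sg13 (by omega)
              exact ⟨by omega, by omega, by omega⟩
            · have hA := sa6 ⟨hc0, hc1, hc2, hc3, hc4, hc5⟩
              have hF := sf2 (by omega)
              have hG := sg10 (by omega)
              exact ⟨by omega, by omega, by omega⟩

lemma h822 (k : ℕ) (hk : 2 ≤ k) : ∀ x, x < 8 * k + 2 →
    1 ≤ f82 k x ∧ f82 k x ≤ 4 * k + 1 ∧
      (x = a82 k (f82 k x) ∨ x = a82 k (f82 k x) + f82 k x) := by
  intro x hx
  obtain ⟨sf0, sf1, sf2, sf3, sf4, sf5, sf6, sf7, sf8, sf9, sf10, sf11, sf12, sf13⟩ := f82_spec k x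
  obtain ⟨sa0, sa1, sa2, sa3, sa4, sa5, sa6⟩ := a82_spec k (f82 k x)
  by_cases hc0 : x + 1 ≤ 2 * k
  · by_cases hp0 : (x + 1) % 2 = 1
    · have hF := sf0 ⟨hc0, hp0⟩
      have hA := sa0 (by omega)
      omega
    · have hF := sf1 ⟨hc0, hp0⟩
      have hA := sa1 (by omega)
      omega
  · by_cases hc1 : x + 1 = 2 * k + 2
    · have hF := sf2 ⟨hc0, hc1⟩
      have hA := sa6 (by omega)
      omega
    · by_cases hc2 : x + 1 ≤ 4 * k - 1
      · by_cases hp2 : (x + 1) % 2 = 1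
        · have hF := sf3 ⟨hc0, hc1, hc2, hp2⟩
          have hA := sa0 (by omega)
          omega
        · have hF := sf4 ⟨hc0, hc1, hc2, hp2⟩
          have hA := sa1 (by omega)
          omega
      · by_cases hc3 : x + 1 = 4 * k + 1
        · have hF := sf5 ⟨hc0, hc1, hc2, hc3⟩
          have hA := sa4 (by omega)
          omega
        · by_cases hc4 : x + 1 ≤ 4 * k + 2
          · have hF := sf6 ⟨hc0, hc1, hc2, hc3, hc4⟩
            have hA := sa1 (by omega)
            omega
          · by_cases hc5 : x + 1 ≤ 5 * k
            · have hF := sf7 ⟨hc0, hc1, hc2, hc3, hc4, hc5⟩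
              have hA := sa5 (by omega)
              omega
            · by_cases hc6 : x + 1 ≤ 5 * k + 2
              · have hF := sf8 ⟨hc0, hc1, hc2, hc3, hc4, hc5, hc6⟩
                have hA := sa2 (by omega)
                omega
              · by_cases hc7 : x + 1 ≤ 6 * k + 2
                · have hF := sf9 ⟨hc0, hc1, hc2, hc3, hc4, hc5, hc6, hc7⟩
                  have hA := sa3 (by omega)
                  omega
                · by_cases hc8 : x + 1 = 6 * k + 3
                  · have hF := sf10 ⟨hc0, hc1, hc2, hc3, hc4, hc5, hc6, hc7, hc8⟩
                    have hA := sa6 (by omega)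
                    omega
                  · by_cases hc9 : x + 1 = 6 * k + 4
                    · have hF := sf11 ⟨hc0, hc1, hc2, hc3, hc4, hc5, hc6, hc7, hc8, hc9⟩
                      have hA := sa4 (by omega)
                      omega
                    · by_cases hc10 : x + 1 ≤ 7 * k + 4
                      · have hF := sf12 ⟨hc0, hc1, hc2, hc3, hc4, hc5, hc6, hc7, hc8, hc9, hc10⟩
                        have hA := sa3 (by omega)
                        omega
                      · have hF := sf13 ⟨hc0, hc1, hc2, hc3, hc4, hc5, hc6, hc7, hc8, hc9, hc10⟩
                        have hA := sa5 (by omega)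
                        omega

lemma hOddz (l : ℕ) : fOdd l ((l - l / 2) + l) = 0 := by
  have h := (fOdd_spec l ((l - l / 2) + l)).2.2.2 (by omega)
  omega

end PDLaux

theorem pathGraph_proper_distance_labeling (n : ℕ) (hn : 2 ≤ n)
    (h4 : n % 8 ≠ 4) (h6 : n % 8 ≠ 6) :
    ∃ f : Fin n → ℕ, IsProperDistLabeling (SimpleGraph.pathGraph n) (n / 2) f := by
  rcases Nat.even_or_odd n with he | ho
  · obtain ⟨m, hm⟩ := he
    rcases Nat.lt_or_ge n 11 with hsmall | hbig
    · have : n = 2 ∨ n = 8 ∨ n = 10 := by omega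
      rcases this with rfl | rfl | rfl
      · exact ⟨_, PDLaux.bridgeEven 2 1 (fun x => [1, 1].getD x 0) (fun d => [0, 0].getD d 0)
          rfl le_rfl (by intro d h1 h2; interval_cases d <;> decide)
          (by intro x hx; interval_cases x <;> decide)⟩
      · exact ⟨_, PDLaux.bridgeEven 8 4 (fun x => [4, 2, 3, 2, 4, 3, 1, 1].getD x 0)
          (fun d => [0, 6, 1, 2, 0].getD d 0) rfl (by norm_num)
          (by intro d h1 h2; interval_cases d <;> decide)
          (by intro x hx; interval_cases x <;> decide)⟩
      · exact ⟨_, PDLaux.bridgeEven 10 5 (fun x => [5, 2, 4, 2, 3, 5, 4, 3, 1, 1].getD x 0)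
          (fun d => [0, 8, 1, 4, 2, 0].getD d 0) rfl (by norm_num)
          (by intro d h1 h2; interval_cases d <;> decide)
          (by intro x hx; interval_cases x <;> decide)⟩
    · rcases Nat.even_or_odd m with hme | hmo
      · obtain ⟨j, hj⟩ := hme
        rcases Nat.even_or_odd j with hje | hjo
        · obtain ⟨k, hk⟩ := hje
          have hnk : n = 8 * k := by omega
          have hk2 : 2 ≤ k := by omega
          have hl : n / 2 = 4 * k := by omega
          rw [hl]
          subst hnk
          exact ⟨_, PDLaux.bridgeEven (8 * k) (4 * k) (PDLaux.f8 k) (PDLaux.a8 k)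
            (by ring) (by omega) (PDLaux.h81 k hk2) (PDLaux.h82 k hk2)⟩
        · exfalso
          obtain ⟨k, hk⟩ := hjo
          exact h4 (by omega)
      · obtain ⟨j, hj⟩ := hmo
        rcases Nat.even_or_odd j with hje | hjo
        · obtain ⟨k, hk⟩ := hje
          have hnk : n = 8 * k + 2 := by omega
          have hk2 : 2 ≤ k := by omega
          have hl : n / 2 = 4 * k + 1 := by omega
          rw [hl]
          subst hnk
          exact ⟨_, PDLaux.bridgeEven (8 * k + 2) (4 * k + 1) (PDLaux.f82 k) (PDLaux.a82 k)
            (by ring_nf) (by omega) (PDLaux.h821 k hk2) (PDLaux.h822 k hk2)⟩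
        · exfalso
          obtain ⟨k, hk⟩ := hjo
          exact h6 (by omega)
  · obtain ⟨l, hl⟩ := ho
    have hln : n / 2 = l := by omega
    rw [hln]
    subst hl
    exact ⟨_, PDLaux.bridgeOdd (2 * l + 1) l ((l - l / 2) + l) (PDLaux.fOdd l) (PDLaux.aOdd l)
      rfl (by omega) (PDLaux.hOddz l) (PDLaux.hOdd1 l) (PDLaux.hOdd2 l)⟩
end

section
/- For all integers m and n with 2 ≤ m ≤ n, the labeling length of the complete bipartite graph K_{m,n} equals m, i.e. λ(K_{m,n}) = m. -/
section Dist
variable {m n : ℕ}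

lemma cbg_dist_lr (a : Fin m) (b : Fin n) :
    (completeBipartiteGraph (Fin m) (Fin n)).dist (Sum.inl a) (Sum.inr b) = 1 := by
  rw [SimpleGraph.dist_eq_one_iff_adj]; simp

lemma cbg_dist_rl (a : Fin m) (b : Fin n) :
    (completeBipartiteGraph (Fin m) (Fin n)).dist (Sum.inr b) (Sum.inl a) = 1 := by
  rw [SimpleGraph.dist_eq_one_iff_adj]; simp

lemma cbg_dist_ll (hn : 0 < n) {a a' : Fin m} (h : a ≠ a') :
    (completeBipartiteGraph (Fin m) (Fin n)).dist (Sum.inl a) (Sum.inl a') = 2 := by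
  set G := completeBipartiteGraph (Fin m) (Fin n)
  have h1 : G.Adj (Sum.inl a) (Sum.inr (⟨0, hn⟩ : Fin n)) := by simp [G]
  have h2 : G.Adj (Sum.inr (⟨0, hn⟩ : Fin n)) (Sum.inl a') := by simp [G]
  have hle : G.dist (Sum.inl a) (Sum.inl a') ≤ 2 := by
    have := SimpleGraph.dist_le (SimpleGraph.Walk.cons h1 (SimpleGraph.Walk.cons h2 SimpleGraph.Walk.nil))
    simpa using this
  have hne0 : G.dist (Sum.inl a) (Sum.inl a') ≠ 0 := by
    rw [ne_eq, SimpleGraph.dist_eq_zero_iff_eq_or_not_reachable]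
    push_neg
    exact ⟨by simp [h], ⟨(SimpleGraph.Walk.cons h1 (SimpleGraph.Walk.cons h2 SimpleGraph.Walk.nil))⟩⟩
  have hne1 : G.dist (Sum.inl a) (Sum.inl a') ≠ 1 := by
    rw [ne_eq, SimpleGraph.dist_eq_one_iff_adj]; simp [G]
  omega

lemma cbg_dist_rr (hm : 0 < m) {b b' : Fin n} (h : b ≠ b') :
    (completeBipartiteGraph (Fin m) (Fin n)).dist (Sum.inr b) (Sum.inr b') = 2 := by
  set G := completeBipartiteGraph (Fin m) (Fin n)
  have h1 : G.Adj (Sum.inr b) (Sum.inl (⟨0, hm⟩ : Fin m)) := by simp [G]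
  have h2 : G.Adj (Sum.inl (⟨0, hm⟩ : Fin m)) (Sum.inr b') := by simp [G]
  have hle : G.dist (Sum.inr b) (Sum.inr b') ≤ 2 := by
    have := SimpleGraph.dist_le (SimpleGraph.Walk.cons h1 (SimpleGraph.Walk.cons h2 SimpleGraph.Walk.nil))
    simpa using this
  have hne0 : G.dist (Sum.inr b) (Sum.inr b') ≠ 0 := by
    rw [ne_eq, SimpleGraph.dist_eq_zero_iff_eq_or_not_reachable]
    push_neg
    exact ⟨by simp [h], ⟨(SimpleGraph.Walk.cons h1 (SimpleGraph.Walk.cons h2 SimpleGraph.Walk.nil))⟩⟩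
  have hne1 : G.dist (Sum.inr b) (Sum.inr b') ≠ 1 := by
    rw [ne_eq, SimpleGraph.dist_eq_one_iff_adj]; simp [G]
  omega

end Dist

/-- Upper bound: an explicit distance `m`-labeling of `K_{m,n}`. -/
lemma cbg_upper (m n : ℕ) (hm : 2 ≤ m) (hmn : m ≤ n) :
    ∃ f : Fin m ⊕ Fin n → ℕ,
      IsDistLabeling (completeBipartiteGraph (Fin m) (Fin n)) m f := by
  refine ⟨Sum.elim (fun a => if a.val = 0 then 0 else if a.val = 1 then 1 else a.val + 1)
    (fun _ => 2), ?_, ?_⟩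
  · left
    ext k
    simp only [Set.mem_range, Set.mem_Icc, Nat.zero_le, true_and]
    constructor
    · rintro ⟨u, rfl⟩
      rcases u with a | b
      · have := a.isLt
        simp only [Sum.elim_inl]
        split_ifs <;> omega
      · simpa using hm
    · intro hk
      rcases Nat.lt_or_ge k 2 with h2 | h2
      · interval_cases k
        · exact ⟨Sum.inl ⟨0, by omega⟩, by simp⟩
        · exact ⟨Sum.inl ⟨1, by omega⟩, by simp⟩
      · rcases Nat.eq_or_lt_of_le h2 with h2' | h3
        · exact ⟨Sum.inr ⟨0, by omega⟩, by simp [h2'.symm]⟩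
        · refine ⟨Sum.inl ⟨k - 1, by omega⟩, ?_⟩
          simp only [Sum.elim_inl]
          split_ifs <;> omega
  · rintro (a | b) (a' | b') huv hf
    · exfalso
      apply huv
      simp only [Sum.elim_inl] at hf
      have ha := a.isLt
      have ha' := a'.isLt
      congr 1
      apply Fin.ext
      split_ifs at hf <;> omega
    · exfalso
      simp only [Sum.elim_inl, Sum.elim_inr] at hf
      split_ifs at hf <;> omega
    · exfalso
      simp only [Sum.elim_inl, Sum.elim_inr] at hf
      split_ifs at hf <;> omega
    · have hbb : b ≠ b' := fun h => huv (by rw [h])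
      simpa using cbg_dist_rr (by omega) hbb

/-- Lower bound: any distance `l`-labeling of `K_{m,n}` has `m ≤ l`. -/
lemma cbg_lower (m n : ℕ) (hm : 2 ≤ m) (hmn : m ≤ n) (l : ℕ) (f : Fin m ⊕ Fin n → ℕ)
    (hf : IsDistLabeling (completeBipartiteGraph (Fin m) (Fin n)) l f) : m ≤ l := by
  obtain ⟨hrange, hlab⟩ := hf
  have hle : ∀ u, f u ≤ l := by
    intro u
    have : f u ∈ Set.range f := ⟨u, rfl⟩
    rcases hrange with h | h <;> rw [h] at this <;> exact this.2
  -- labels shared within the left part are 2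
  have hLL : ∀ a a' : Fin m, a ≠ a' → f (Sum.inl a) = f (Sum.inl a') → f (Sum.inl a) = 2 := by
    intro a a' h hff
    have := hlab _ _ (by simp [h]) hff
    rw [cbg_dist_ll (by omega) h] at this
    omega
  have hRR : ∀ b b' : Fin n, b ≠ b' → f (Sum.inr b) = f (Sum.inr b') → f (Sum.inr b) = 2 := by
    intro b b' h hff
    have := hlab _ _ (by simp [h]) hff
    rw [cbg_dist_rr (by omega) h] at this
    omega
  have hLR : ∀ (a : Fin m) (b : Fin n), f (Sum.inl a) = f (Sum.inr b) → f (Sum.inl a) = 1 := by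
    intro a b hff
    have := hlab _ _ (by simp) hff
    rw [cbg_dist_lr] at this
    omega
  rcases Nat.lt_or_ge l 2 with hl | hl
  · -- small case: impossible
    exfalso
    -- find left and right vertices labeled 0
    have hL0 : ∃ a : Fin m, f (Sum.inl a) = 0 := by
      have hne : (⟨0, by omega⟩ : Fin m) ≠ ⟨1, by omega⟩ := by simp [Fin.ext_iff]
      have hd : f (Sum.inl ⟨0, by omega⟩) ≠ f (Sum.inl ⟨1, by omega⟩) := by
        intro h
        have := hLL _ _ hne h
        have := hle (Sum.inl ⟨0, by omega⟩)
        omega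
      have := hle (Sum.inl (⟨0, by omega⟩ : Fin m))
      have := hle (Sum.inl (⟨1, by omega⟩ : Fin m))
      rcases Nat.eq_zero_or_pos (f (Sum.inl ⟨0, by omega⟩)) with h | h
      · exact ⟨_, h⟩
      · exact ⟨⟨1, by omega⟩, by omega⟩
    have hR0 : ∃ b : Fin n, f (Sum.inr b) = 0 := by
      have hne : (⟨0, by omega⟩ : Fin n) ≠ ⟨1, by omega⟩ := by simp [Fin.ext_iff]
      have hd : f (Sum.inr ⟨0, by omega⟩) ≠ f (Sum.inr ⟨1, by omega⟩) := by
        intro h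
        have := hRR _ _ hne h
        have := hle (Sum.inr ⟨0, by omega⟩)
        omega
      have := hle (Sum.inr (⟨0, by omega⟩ : Fin n))
      have := hle (Sum.inr (⟨1, by omega⟩ : Fin n))
      rcases Nat.eq_zero_or_pos (f (Sum.inr ⟨0, by omega⟩)) with h | h
      · exact ⟨_, h⟩
      · exact ⟨⟨1, by omega⟩, by omega⟩
    obtain ⟨a, ha⟩ := hL0
    obtain ⟨b, hb⟩ := hR0
    have := hLR a b (by omega)
    omega
  · -- main case: l ≥ 2
    by_cases hL2 : ∃ a : Fin m, f (Sum.inl a) = 2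
    · -- then no right vertex is labeled 2, so f is injective on the right, n ≤ l
      obtain ⟨a0, ha0⟩ := hL2
      have hR2 : ∀ b : Fin n, f (Sum.inr b) ≠ 2 := by
        intro b hb
        have := hLR a0 b (by omega)
        omega
      have hinj : Set.InjOn (fun b : Fin n => f (Sum.inr b)) ↑(Finset.univ : Finset (Fin n)) := by
        intro b _ b' _ h
        by_contra hne
        exact hR2 b (hRR b b' hne h)
      have hmaps : ∀ b ∈ (Finset.univ : Finset (Fin n)),
          f (Sum.inr b) ∈ (Finset.Icc 0 l).erase 2 := by
        intro b _
        rw [Finset.mem_erase, Finset.mem_Icc]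
        exact ⟨hR2 b, Nat.zero_le _, hle _⟩
      have := Finset.card_le_card_of_injOn _ hmaps hinj
      rw [Finset.card_erase_of_mem (by rw [Finset.mem_Icc]; omega)] at this
      simp [Nat.card_Icc] at this
      omega
    · push_neg at hL2
      have hinj : Set.InjOn (fun a : Fin m => f (Sum.inl a)) ↑(Finset.univ : Finset (Fin m)) := by
        intro a _ a' _ h
        by_contra hne
        exact hL2 a (hLL a a' hne h)
      have hmaps : ∀ a ∈ (Finset.univ : Finset (Fin m)),
          f (Sum.inl a) ∈ (Finset.Icc 0 l).erase 2 := by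
        intro a _
        rw [Finset.mem_erase, Finset.mem_Icc]
        exact ⟨hL2 a, Nat.zero_le _, hle _⟩
      have := Finset.card_le_card_of_injOn _ hmaps hinj
      rw [Finset.card_erase_of_mem (by rw [Finset.mem_Icc]; omega)] at this
      simp [Nat.card_Icc] at this
      omega

theorem labelingLength_completeBipartiteGraph (m n : ℕ) (hm : 2 ≤ m) (hmn : m ≤ n) :
    labelingLength (completeBipartiteGraph (Fin m) (Fin n)) = m := by
  have hmem : m ∈ {l : ℕ | ∃ f : Fin m ⊕ Fin n → ℕ,
      IsDistLabeling (completeBipartiteGraph (Fin m) (Fin n)) l f} := cbg_upper m n hm hmn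
  apply le_antisymm
  · exact Nat.sInf_le hmem
  · obtain ⟨f, hf⟩ := Nat.sInf_mem ⟨m, hmem⟩
    exact cbg_lower m n hm hmn _ f hf
end

section
/- For all integers m and n with 3 ≤ m ≤ n, the complete bipartite graph K_{m,n} does not admit a proper distance l-labeling for any nonnegative integer l. -/
theorem completeBipartiteGraph_no_proper_distance_labeling (m n : ℕ)
    (hm : 3 ≤ m) (hmn : m ≤ n) :
    ¬ ∃ (l : ℕ) (f : Fin m ⊕ Fin n → ℕ),
        IsProperDistLabeling (completeBipartiteGraph (Fin m) (Fin n)) l f := by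
  have hn : 3 ≤ n := le_trans hm hmn
  set G := completeBipartiteGraph (Fin m) (Fin n) with hG
  have hm0 : 0 < m := by omega
  have hn0 : 0 < n := by omega
  have hadj : ∀ (a : Fin m) (b : Fin n), G.Adj (Sum.inl a) (Sum.inr b) := by
    intro a b; simp [hG]
  -- every pair of vertices is at distance ≤ 2
  have hdle : ∀ u v : Fin m ⊕ Fin n, G.dist u v ≤ 2 := by
    rintro (a | b) (a' | b')
    · refine le_trans (SimpleGraph.dist_le (SimpleGraph.Walk.cons (hadj a ⟨0, hn0⟩)
        (SimpleGraph.Walk.cons ((hadj a' ⟨0, hn0⟩).symm) SimpleGraph.Walk.nil))) (by simp)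
    · refine le_trans (SimpleGraph.dist_le (hadj a b').toWalk) (by simp)
    · refine le_trans (SimpleGraph.dist_le ((hadj a' b).symm).toWalk) (by simp)
    · refine le_trans (SimpleGraph.dist_le (SimpleGraph.Walk.cons ((hadj ⟨0, hm0⟩ b).symm)
        (SimpleGraph.Walk.cons (hadj ⟨0, hm0⟩ b') SimpleGraph.Walk.nil))) (by simp)
  have hreach : ∀ u v : Fin m ⊕ Fin n, G.Reachable u v := by
    rintro (a | b) (a' | b')
    · exact ((hadj a ⟨0, hn0⟩).reachable).trans ((hadj a' ⟨0, hn0⟩).symm).reachable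
    · exact (hadj a b').reachable
    · exact ((hadj a' b).symm).reachable
    · exact (((hadj ⟨0, hm0⟩ b).symm).reachable).trans (hadj ⟨0, hm0⟩ b').reachable
  rintro ⟨l, f, ⟨⟨hrange, hdist⟩, hproper⟩⟩
  -- no two distinct vertices share label 0
  have h0 : ∀ u v : Fin m ⊕ Fin n, u ≠ v → f u = 0 → f v = 0 → False := by
    intro u v huv hu hv
    have hd : G.dist u v = 0 := by rw [hdist u v huv (hu.trans hv.symm), hu]
    exact huv ((hreach u v).dist_eq_zero_iff.mp hd)
  rcases le_or_gt l 2 with hl | hl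
  · -- small l: all labels are ≤ 2
    have hfle : ∀ x, f x ≤ 2 := by
      intro x
      have hx : f x ∈ Set.range f := ⟨x, rfl⟩
      rcases hrange with h | h <;> rw [h, Set.mem_Icc] at hx <;> omega
    -- two distinct left vertices cannot share a label ≤ 1
    have hsameL : ∀ a a' : Fin m, a ≠ a' → f (Sum.inl a) = f (Sum.inl a') →
        f (Sum.inl a) ≤ 1 → False := by
      intro a a' ha hf hle
      have hne : (Sum.inl a : Fin m ⊕ Fin n) ≠ Sum.inl a' := by simp [ha]
      rcases Nat.le_one_iff_eq_zero_or_eq_one.mp hle with h | h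
      · exact h0 _ _ hne h (hf.symm.trans h)
      · have := SimpleGraph.dist_eq_one_iff_adj.mp (by rw [hdist _ _ hne hf, h])
        simp [hG] at this
    have hsameR : ∀ b b' : Fin n, b ≠ b' → f (Sum.inr b) = f (Sum.inr b') →
        f (Sum.inr b) ≤ 1 → False := by
      intro b b' hb hf hle
      have hne : (Sum.inr b : Fin m ⊕ Fin n) ≠ Sum.inr b' := by simp [hb]
      rcases Nat.le_one_iff_eq_zero_or_eq_one.mp hle with h | h
      · exact h0 _ _ hne h (hf.symm.trans h)
      · have := SimpleGraph.dist_eq_one_iff_adj.mp (by rw [hdist _ _ hne hf, h])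
        simp [hG] at this
    -- label 2 cannot appear on both sides
    have hcross : ∀ (a : Fin m) (b : Fin n), f (Sum.inl a) = 2 → f (Sum.inr b) = 2 → False := by
      intro a b ha hb
      have hne : (Sum.inl a : Fin m ⊕ Fin n) ≠ Sum.inr b := by simp
      have hd : G.dist (Sum.inl a) (Sum.inr b) = 2 := by
        rw [hdist _ _ hne (ha.trans hb.symm), ha]
      have h1 : G.dist (Sum.inl a) (Sum.inr b) = 1 :=
        SimpleGraph.dist_eq_one_iff_adj.mpr (hadj a b)
      omega
    by_cases hL : ∃ a : Fin m, f (Sum.inl a) = 2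
    · obtain ⟨a0, ha0⟩ := hL
      -- then all right labels are ≤ 1; pigeonhole on three right vertices
      have hR : ∀ b : Fin n, f (Sum.inr b) ≤ 1 := by
        intro b
        have h2 := hfle (Sum.inr b)
        rcases Nat.lt_or_ge (f (Sum.inr b)) 2 with h | h
        · omega
        · exact absurd (hcross a0 b ha0 (by omega)) (by simp)
      set b0 : Fin n := ⟨0, by omega⟩
      set b1 : Fin n := ⟨1, by omega⟩
      set b2 : Fin n := ⟨2, by omega⟩
      have h01 : b0 ≠ b1 := by simp [b0, b1, Fin.ext_iff]
      have h02 : b0 ≠ b2 := by simp [b0, b2, Fin.ext_iff]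
      have h12 : b1 ≠ b2 := by simp [b1, b2, Fin.ext_iff]
      have e0 := hR b0
      have e1 := hR b1
      have e2 := hR b2
      have : f (Sum.inr b0) = f (Sum.inr b1) ∨ f (Sum.inr b0) = f (Sum.inr b2) ∨
          f (Sum.inr b1) = f (Sum.inr b2) := by omega
      rcases this with h | h | h
      · exact hsameR b0 b1 h01 h e0
      · exact hsameR b0 b2 h02 h e0
      · exact hsameR b1 b2 h12 h e1
    · push_neg at hL
      have hLle : ∀ a : Fin m, f (Sum.inl a) ≤ 1 := by
        intro a
        have := hfle (Sum.inl a)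
        have := hL a
        omega
      set a0 : Fin m := ⟨0, by omega⟩
      set a1 : Fin m := ⟨1, by omega⟩
      set a2 : Fin m := ⟨2, by omega⟩
      have h01 : a0 ≠ a1 := by simp [a0, a1, Fin.ext_iff]
      have h02 : a0 ≠ a2 := by simp [a0, a2, Fin.ext_iff]
      have h12 : a1 ≠ a2 := by simp [a1, a2, Fin.ext_iff]
      have e0 := hLle a0
      have e1 := hLle a1
      have e2 := hLle a2
      have : f (Sum.inl a0) = f (Sum.inl a1) ∨ f (Sum.inl a0) = f (Sum.inl a2) ∨
          f (Sum.inl a1) = f (Sum.inl a2) := by omega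
      rcases this with h | h | h
      · exact hsameL a0 a1 h01 h e0
      · exact hsameL a0 a2 h02 h e0
      · exact hsameL a1 a2 h12 h e1
  · -- large l: label 3 would require distance 3 > 2
    obtain ⟨u, v, huv, hu, hv⟩ := hproper 3 (by norm_num) hl
    have hd : G.dist u v = 3 := by rw [hdist u v huv (hu.trans hv.symm), hu]
    have := hdle u v
    omega
end

section
/- For every pair of positive integers l and r, there exists a finite connected simple graph G of order lr that admits a regular distance l-labeling of degree r. -/
/-- A distance `l`-labeling is regular of degree `r` if every label `k ∈ {1,…,l}` is used by
exactly `r` vertices. -/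
def IsRegularDistLabeling {V : Type*} [Fintype V] [DecidableEq V]
    (G : SimpleGraph V) (l r : ℕ) (f : V → ℕ) : Prop :=
  IsDistLabeling G l f ∧
    ∀ k : ℕ, 1 ≤ k → k ≤ l → (Finset.univ.filter (fun v : V => f v = k)).card = r

/-! The graph is a clique on `r` vertices with pendant paths. Vertex `(k, i)` (`k < l`, `i < r`)
gets label `k + 1` and sits at depth `(k + 1) / 2` on a path hanging from clique vertex `i` if `k`
is even and from clique vertex `0` if `k` is odd. Two vertices with the same label `k + 1` are
joined through the clique, via a common vertex when `k` is odd and via one clique edge when `k` is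
even, so they are `k + 1` apart.

The graph distance is never computed directly: an `ℕ`-valued metric in which any two points at
distance at least `2` have a point strictly between them is the graph distance of its own
unit-distance graph, and the distance described above is such a metric. -/

structure IsGeodesicNatMetric {V : Type*} (d : V → V → ℕ) : Prop where
  eq_zero_iff {u v : V} : d u v = 0 ↔ u = v
  symm (u v : V) : d u v = d v u
  triangle (u v w : V) : d u w ≤ d u v + d v w
  exists_between (u v : V) : 2 ≤ d u v → ∃ w, 0 < d u w ∧ 0 < d w v ∧ d u w + d w v = d u v

def SimpleGraph.unitDistGraph {V : Type*} (d : V → V → ℕ) : SimpleGraph V :=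
  SimpleGraph.fromRel fun u v => d u v = 1

namespace IsGeodesicNatMetric

open SimpleGraph

variable {V W : Type*} {d : V → V → ℕ}

theorem exists_walk_length_le (hd : IsGeodesicNatMetric d) (u v : V) :
    ∃ p : (unitDistGraph d).Walk u v, p.length ≤ d u v := by
  obtain h | h | h : d u v = 0 ∨ d u v = 1 ∨ 2 ≤ d u v := by omega
  · obtain rfl := hd.eq_zero_iff.1 h
    exact ⟨.nil, Nat.zero_le _⟩
  · have hne : u ≠ v := by rintro rfl; simp [hd.eq_zero_iff.2 rfl] at h
    exact ⟨.cons ((fromRel_adj _ _ _).2 ⟨hne, .inl h⟩) .nil, h.ge⟩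
  · obtain ⟨w, huw, hwv, hsum⟩ := hd.exists_between u v h
    obtain ⟨p, hp⟩ := hd.exists_walk_length_le u w
    obtain ⟨q, hq⟩ := hd.exists_walk_length_le w v
    exact ⟨p.append q, by rw [Walk.length_append]; omega⟩
termination_by d u v

theorem le_length (hd : IsGeodesicNatMetric d) {u v : V} (p : (unitDistGraph d).Walk u v) :
    d u v ≤ p.length := by
  induction p with
  | nil => simp [hd.eq_zero_iff]
  | @cons a b c hab q ih =>
    have hab : d a b = 1 := by
      rcases ((fromRel_adj _ _ _).1 hab).2 with h | h
      · exact h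
      · rwa [hd.symm]
    rw [Walk.length_cons]
    linarith [hd.triangle a b c]

theorem dist_unitDistGraph (hd : IsGeodesicNatMetric d) (u v : V) :
    (unitDistGraph d).dist u v = d u v := by
  obtain ⟨p, hp⟩ := hd.exists_walk_length_le u v
  obtain ⟨q, hq⟩ := p.reachable.exists_walk_length_eq_dist
  exact le_antisymm ((dist_le p).trans hp) (hq ▸ hd.le_length q)

theorem connected_unitDistGraph [Nonempty V] (hd : IsGeodesicNatMetric d) :
    (unitDistGraph d).Connected :=
  (connected_iff _).2
    ⟨fun u v => (hd.exists_walk_length_le u v).elim fun p _ => p.reachable, inferInstance⟩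

theorem comp_equiv (hd : IsGeodesicNatMetric d) (e : W ≃ V) :
    IsGeodesicNatMetric fun u v => d (e u) (e v) where
  eq_zero_iff := by simp [hd.eq_zero_iff]
  symm u v := hd.symm (e u) (e v)
  triangle u v w := hd.triangle (e u) (e v) (e w)
  exists_between u v h := by
    obtain ⟨w, hw⟩ := hd.exists_between (e u) (e v) h
    exact ⟨e.symm w, by simpa using hw⟩

end IsGeodesicNatMetric

section PendantPaths

variable {V L R : Type*} [DecidableEq L] [DecidableEq R]
  (leg : V → L) (root : L → R) (depth : V → ℕ)

/-- Distance in the graph obtained from a clique on `R` by hanging, for each `ℓ : L`, a path from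
`root ℓ`; the point `v` sits at depth `depth v` on the path `leg v`. -/
def pendantPathDist (u v : V) : ℕ :=
  if leg u = leg v then depth u - depth v + (depth v - depth u)
  else depth u + depth v + if root (leg u) = root (leg v) then 0 else 1

theorem pendantPathDist_comm (u v : V) :
    pendantPathDist leg root depth u v = pendantPathDist leg root depth v u := by
  grind [pendantPathDist]

theorem pendantPathDist_triangle (u v w : V) :
    pendantPathDist leg root depth u w ≤
      pendantPathDist leg root depth u v + pendantPathDist leg root depth v w := by
  grind [pendantPathDist]

end PendantPaths

def spiderLeg (p : ℕ × ℕ) : ℕ × ℕ := (p.1 % 2, p.2)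

def spiderRoot (leg : ℕ × ℕ) : ℕ := if leg.1 = 1 then 0 else leg.2

def spiderDepth (p : ℕ × ℕ) : ℕ := (p.1 + 1) / 2

abbrev spiderDist : ℕ × ℕ → ℕ × ℕ → ℕ := pendantPathDist spiderLeg spiderRoot spiderDepth

/-- For `p.1 ≤ 2` the truncated `p.1 - 2` makes this the clique vertex the leg hangs from. -/
def spiderParent (p : ℕ × ℕ) : ℕ × ℕ := (p.1 - 2, if p.1 = 1 then 0 else p.2)

lemma spiderDist_eq_zero_iff {p q : ℕ × ℕ} : spiderDist p q = 0 ↔ p = q := by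
  grind [pendantPathDist, spiderLeg, spiderRoot, spiderDepth]

lemma spiderDist_parent {p : ℕ × ℕ} (hp : 0 < p.1) : spiderDist p (spiderParent p) = 1 := by
  grind [pendantPathDist, spiderLeg, spiderRoot, spiderDepth, spiderParent]

lemma spiderDist_parent_add_one {p q : ℕ × ℕ} (hp : 0 < p.1) (hpq : p ≠ q)
    (hdepth : spiderDepth q ≤ spiderDepth p) :
    spiderDist (spiderParent p) q + 1 = spiderDist p q := by
  grind [pendantPathDist, spiderLeg, spiderRoot, spiderDepth, spiderParent]

lemma spiderDist_of_fst_eq {p q : ℕ × ℕ} (h₁ : p.1 = q.1) (h₂ : p.2 ≠ q.2) :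
    spiderDist p q = p.1 + 1 := by
  grind [pendantPathDist, spiderLeg, spiderRoot, spiderDepth]

lemma pos_fst_of_one_lt_spiderDist {p q : ℕ × ℕ} (hdepth : spiderDepth q ≤ spiderDepth p)
    (h : 1 < spiderDist p q) : 0 < p.1 := by
  grind [pendantPathDist, spiderLeg, spiderRoot, spiderDepth]

lemma spiderParent_lt {l r : ℕ} {p : ℕ × ℕ} (hl : p.1 < l) (hr : p.2 < r) :
    (spiderParent p).1 < l ∧ (spiderParent p).2 < r := by
  grind [spiderParent]

abbrev spiderMetric (l r : ℕ) (u v : Fin l × Fin r) : ℕ :=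
  spiderDist (Prod.map Fin.val Fin.val u) (Prod.map Fin.val Fin.val v)

section SpiderMetric

variable {l r : ℕ}

lemma spiderMetric_comm (u v : Fin l × Fin r) : spiderMetric l r u v = spiderMetric l r v u :=
  pendantPathDist_comm _ _ _ _ _

lemma exists_between_spiderMetric_of_depth_le {u v : Fin l × Fin r}
    (hdepth : spiderDepth (Prod.map Fin.val Fin.val v) ≤ spiderDepth (Prod.map Fin.val Fin.val u))
    (h : 2 ≤ spiderMetric l r u v) :
    ∃ w, spiderMetric l r u w = 1 ∧ spiderMetric l r w v + 1 = spiderMetric l r u v := by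
  set p := Prod.map Fin.val Fin.val u
  have hp : 0 < p.1 := pos_fst_of_one_lt_spiderDist hdepth h
  have hpv : p ≠ Prod.map Fin.val Fin.val v := by
    intro hpv
    have : spiderMetric l r u v = 0 := spiderDist_eq_zero_iff.2 hpv
    omega
  obtain ⟨hl, hr⟩ := spiderParent_lt (p := p) u.1.isLt u.2.isLt
  exact ⟨(⟨_, hl⟩, ⟨_, hr⟩), spiderDist_parent hp, spiderDist_parent_add_one hp hpv hdepth⟩

theorem isGeodesicNatMetric_spiderMetric : IsGeodesicNatMetric (spiderMetric l r) where
  eq_zero_iff := spiderDist_eq_zero_iff.trans (Fin.val_injective.prodMap Fin.val_injective).eq_iff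
  symm := spiderMetric_comm
  triangle u v w := pendantPathDist_triangle _ _ _ _ _ _
  exists_between u v h := by
    rcases le_total (spiderDepth (Prod.map Fin.val Fin.val v))
      (spiderDepth (Prod.map Fin.val Fin.val u)) with hdepth | hdepth
    · obtain ⟨w, huw, hwv⟩ := exists_between_spiderMetric_of_depth_le hdepth h
      exact ⟨w, by omega, by omega, by omega⟩
    · obtain ⟨w, hvw, hwu⟩ :=
        exists_between_spiderMetric_of_depth_le hdepth (spiderMetric_comm u v ▸ h)
      rw [spiderMetric_comm v] at hvw
      rw [spiderMetric_comm w, spiderMetric_comm v] at hwu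
      exact ⟨w, by omega, by omega, by omega⟩

end SpiderMetric

section Labels

variable {l r : ℕ}

lemma range_fst_add_one (hr : 0 < r) :
    Set.range (fun p : Fin l × Fin r => (p.1 : ℕ) + 1) = Set.Icc 1 l := by
  ext k
  constructor
  · rintro ⟨p, rfl⟩
    exact ⟨Nat.le_add_left 1 _, p.1.isLt⟩
  · rintro ⟨hk1, hkl⟩
    exact ⟨(⟨k - 1, by omega⟩, ⟨0, hr⟩), show k - 1 + 1 = k by omega⟩

lemma card_filter_fst_add_one_eq {k : ℕ} (hk1 : 1 ≤ k) (hkl : k ≤ l) :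
    (Finset.univ.filter fun p : Fin l × Fin r => (p.1 : ℕ) + 1 = k).card = r := by
  have : (Finset.univ.filter fun p : Fin l × Fin r => (p.1 : ℕ) + 1 = k) =
      {⟨k - 1, by omega⟩} ×ˢ Finset.univ := by
    ext p
    simp only [Finset.mem_filter, Finset.mem_univ, true_and, Finset.mem_product,
      Finset.mem_singleton, Fin.ext_iff, and_true]
    omega
  simp [this]

end Labels

theorem exists_graph_regular_distance_labeling (l r : ℕ) (hl : 0 < l) (hr : 0 < r) :
    ∃ G : SimpleGraph (Fin (l * r)), G.Connected ∧
      ∃ f : Fin (l * r) → ℕ, IsRegularDistLabeling G l r f := by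
  set e : Fin (l * r) ≃ Fin l × Fin r := finProdFinEquiv.symm
  have hd := isGeodesicNatMetric_spiderMetric.comp_equiv e
  have : Nonempty (Fin (l * r)) := ⟨⟨0, Nat.mul_pos hl hr⟩⟩
  refine ⟨_, hd.connected_unitDistGraph, fun v => (e v).1 + 1,
    ⟨Or.inr ?_, fun u v huv hf => ?_⟩, fun k hk1 hkl => ?_⟩
  · exact (e.surjective.range_comp _).trans (range_fst_add_one hr)
  · have h₂ : (e u).2 ≠ (e v).2 := fun h₂ =>
      huv (e.injective (Prod.ext (Fin.ext (by simpa using hf)) h₂))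
    rw [hd.dist_unitDistGraph]
    exact spiderDist_of_fst_eq (by simpa using hf) (by simpa [Fin.val_inj] using h₂)
  · exact (Finset.card_equiv e (by simp)).trans (card_filter_fst_add_one_eq hk1 hkl)
end

section
/- For every positive integer l, there exists a finite connected simple graph of order 2l and size (l+2)(l+1)/2 − 2 that admits a regular distance l-labeling of degree 2. -/
/-!
The witness is the lollipop graph on `0, …, 2l - 1`: a clique on `0, …, l` with the path
`l, l + 1, …, 2l - 1` attached at `l`. Counting each edge at its larger endpoint gives
`l(l + 1)/2 + (l - 1)` edges. Label `v` by `v mod l + 1`, so that label `m + 1` sits on `m` and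
`l + m`. These are at distance `m + 1`: one step to `l` and `m` steps along the path, and no walk
is shorter because the function equal to `m + 1` on `0, …, l - 1` and to `l + m - v` elsewhere
drops by at most one along each edge.
-/

open Finset

namespace SimpleGraph

variable {V : Type*} {G : SimpleGraph V}

theorem le_add_dist_of_forall_adj_le (ψ : V → ℕ) (hψ : ∀ u v, G.Adj u v → ψ u ≤ ψ v + 1)
    {u v : V} (huv : G.Reachable u v) : ψ u ≤ ψ v + G.dist u v := by
  obtain ⟨p, hp⟩ := huv.exists_walk_length_eq_dist
  rw [← hp]
  clear hp huv
  induction p with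
  | nil => simp
  | cons hadj _ ih =>
    have := hψ _ _ hadj
    rw [Walk.length_cons]
    omega

theorem card_edgeFinset_eq_sum_card_lt [Fintype V] [LinearOrder V] [DecidableRel G.Adj] :
    #G.edgeFinset = ∑ v, #{u | G.Adj u v ∧ u < v} := by
  rw [card_eq_sum_card_fiberwise (f := Sym2.sup) (t := univ) fun _ _ ↦ mem_univ _]
  refine sum_congr rfl fun v _ ↦ ?_
  have hfiber : ({e ∈ G.edgeFinset | e.sup = v} : Finset (Sym2 V)) =
      ({u | G.Adj u v ∧ u < v} : Finset V).image (s(·, v)) := by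
    ext e
    induction e using Sym2.ind with
    | _ a b =>
      simp only [mem_filter, mem_edgeFinset, mem_edgeSet, Sym2.sup_mk, mem_image, mem_univ,
        true_and, Sym2.eq_iff]
      constructor
      · rintro ⟨hab, rfl⟩
        rcases lt_or_gt_of_ne hab.ne with h | h
        · exact ⟨a, ⟨by rwa [max_eq_right h.le], by rwa [max_eq_right h.le]⟩, by simp [h.le]⟩
        · exact ⟨b, ⟨by rw [max_eq_left h.le]; exact hab.symm, by rwa [max_eq_left h.le]⟩,
            by simp [h.le]⟩
      · rintro ⟨u, ⟨hu, hlt⟩, (⟨rfl, rfl⟩ | ⟨rfl, rfl⟩)⟩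
        · exact ⟨hu, max_eq_right hlt.le⟩
        · exact ⟨hu.symm, max_eq_left hlt.le⟩
  rw [hfiber, card_image_of_injective _ fun _ _ ↦ Sym2.congr_left.mp]

theorem dist_le_of_pathGraph_le {n : ℕ} {G : SimpleGraph (Fin n)} (h : pathGraph n ≤ G)
    (a : Fin n) (k : ℕ) (hk : a + k < n) : G.dist a ⟨a + k, hk⟩ ≤ k := by
  induction k with
  | zero => simp
  | succ k ih =>
    have hadj : G.Adj ⟨a + k, by omega⟩ ⟨a + (k + 1), hk⟩ := h (by simp [pathGraph_adj]; omega)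
    calc G.dist a ⟨a + (k + 1), hk⟩
        ≤ G.dist a ⟨a + k, by omega⟩ + G.dist ⟨a + k, by omega⟩ ⟨a + (k + 1), hk⟩ :=
          hadj.reachable.dist_triangle_right _
      _ ≤ k + 1 := by rw [dist_eq_one_iff_adj.mpr hadj]; exact Nat.add_le_add_right (ih _) 1

end SimpleGraph

/-- The lollipop graph: the vertices `0, …, c` form a clique, and `c, c + 1, …, n - 1` a path. -/
def lollipop (n c : ℕ) : SimpleGraph (Fin n) :=
  SimpleGraph.fromRel fun u v ↦ (u.val ≤ c ∧ v.val ≤ c) ∨ u.val + 1 = v.val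

instance (n c : ℕ) : DecidableRel (lollipop n c).Adj :=
  inferInstanceAs (DecidableRel (SimpleGraph.fromRel _).Adj)

namespace lollipop

variable {n c : ℕ}

theorem adj_iff {u v : Fin n} : (lollipop n c).Adj u v ↔
    u ≠ v ∧ ((u.val ≤ c ∧ v.val ≤ c) ∨ u.val + 1 = v.val ∨ v.val + 1 = u.val) := by
  simp only [lollipop, SimpleGraph.fromRel_adj]
  omega

theorem pathGraph_le : SimpleGraph.pathGraph n ≤ lollipop n c := fun u v h ↦ by
  rw [SimpleGraph.pathGraph_adj] at h
  rw [adj_iff, ne_eq, Fin.ext_iff]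
  omega

theorem connected (hn : 0 < n) : (lollipop n c).Connected :=
  haveI : Nonempty (Fin n) := ⟨⟨0, hn⟩⟩
  ⟨(SimpleGraph.pathGraph_preconnected n).mono pathGraph_le⟩

theorem dist_eq {m w : Fin n} (hm : m.val < c) (hw : c ≤ w.val) :
    (lollipop n c).dist m w = w.val - c + 1 := by
  have hc : c < n := by omega
  apply le_antisymm
  · have hmc : (lollipop n c).Adj m ⟨c, hc⟩ := by
      simp only [adj_iff, ne_eq, Fin.ext_iff]; omega
    have hcw : (lollipop n c).dist ⟨c, hc⟩ w ≤ w.val - c := by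
      simpa [Nat.add_sub_cancel' hw] using SimpleGraph.dist_le_of_pathGraph_le pathGraph_le
        ⟨c, hc⟩ (w.val - c) (by dsimp only; omega)
    calc (lollipop n c).dist m w
        ≤ (lollipop n c).dist m ⟨c, hc⟩ + (lollipop n c).dist ⟨c, hc⟩ w :=
          (connected (by omega)).dist_triangle
      _ ≤ w.val - c + 1 := by rw [SimpleGraph.dist_eq_one_iff_adj.mpr hmc]; omega
  · let ψ : Fin n → ℕ := fun v ↦ if v.val < c then w.val - c + 1 else w - v
    have hψ : ∀ u v, (lollipop n c).Adj u v → ψ u ≤ ψ v + 1 := fun u v huv ↦ by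
      rw [adj_iff] at huv
      simp only [ψ]
      split_ifs <;> omega
    have hle := SimpleGraph.le_add_dist_of_forall_adj_le ψ hψ
      ((connected (by omega)).preconnected m w)
    simp only [ψ, if_pos hm, if_neg (not_lt.mpr hw), Nat.sub_self] at hle
    omega

theorem card_lt_adj (v : Fin n) :
    #{u | (lollipop n c).Adj u v ∧ u < v} = if v.val ≤ c then v.val else 1 := by
  split_ifs with hv
  · convert Fin.card_Iio v using 2
    ext u
    simp only [mem_filter, mem_univ, true_and, mem_Iio, adj_iff, ne_eq, Fin.ext_iff, Fin.lt_def]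
    omega
  · rw [card_eq_one]
    refine ⟨⟨v - 1, by omega⟩, ?_⟩
    ext u
    simp only [mem_filter, mem_univ, true_and, mem_singleton, adj_iff, ne_eq, Fin.ext_iff,
      Fin.lt_def]
    omega

theorem two_mul_card_edgeFinset (hc : c < n) :
    2 * #(lollipop n c).edgeFinset = c * (c + 1) + 2 * (n - (c + 1)) := by
  rw [SimpleGraph.card_edgeFinset_eq_sum_card_lt]
  simp only [card_lt_adj]
  rw [Fin.sum_univ_eq_sum_range (fun i ↦ if i ≤ c then i else 1)]
  induction n, hc using Nat.le_induction with
  | base =>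
    rw [sum_congr rfl fun i hi ↦ if_pos (Nat.lt_succ_iff.mp (mem_range.mp hi)), mul_comm,
      sum_range_id_mul_two]
    simp [mul_comm]
  | succ n hn ih =>
    rw [sum_range_succ, if_neg (by omega)]
    omega

end lollipop

section TwinLabeling

variable {l : ℕ}

theorem range_mod_add_one (hl : 0 < l) :
    Set.range (fun v : Fin (2 * l) ↦ v.val % l + 1) = Set.Icc 1 l := by
  ext k
  simp only [Set.mem_range, Set.mem_Icc]
  constructor
  · rintro ⟨v, rfl⟩
    exact ⟨by omega, Nat.mod_lt _ hl⟩
  · rintro ⟨hk1, hk2⟩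
    refine ⟨⟨k - 1, by omega⟩, ?_⟩
    show (k - 1) % l + 1 = k
    rw [Nat.mod_eq_of_lt (by omega)]; omega

theorem mod_eq_self_or_sub_of_lt_two_mul {x : ℕ} (hx : x < 2 * l) :
    x < l ∧ x % l = x ∨ l ≤ x ∧ x % l = x - l := by
  rcases lt_or_ge x l with h | h
  · exact .inl ⟨h, Nat.mod_eq_of_lt h⟩
  · exact .inr ⟨h, by rw [Nat.mod_eq_sub_mod h, Nat.mod_eq_of_lt (by omega)]⟩

theorem card_mod_add_one_eq {k : ℕ} (hk1 : 1 ≤ k) (hk2 : k ≤ l) :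
    #{v : Fin (2 * l) | v.val % l + 1 = k} = 2 := by
  rw [card_eq_two]
  refine ⟨⟨k - 1, by omega⟩, ⟨l + (k - 1), by omega⟩, by simp [Fin.ext_iff]; omega, ?_⟩
  ext v
  simp only [mem_filter, mem_univ, true_and, mem_insert, mem_singleton, Fin.ext_iff]
  have := mod_eq_self_or_sub_of_lt_two_mul v.isLt
  omega

theorem lollipop.dist_of_mod_eq {u v : Fin (2 * l)} (huv : u < v) (h : u.val % l = v.val % l) :
    (lollipop (2 * l) l).dist u v = u.val % l + 1 := by
  have hu := mod_eq_self_or_sub_of_lt_two_mul u.isLt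
  have hv := mod_eq_self_or_sub_of_lt_two_mul v.isLt
  rw [Fin.lt_def] at huv
  rw [lollipop.dist_eq (by omega) (by omega)]
  omega

theorem lollipop.isRegularDistLabeling_mod_add_one (hl : 0 < l) :
    IsRegularDistLabeling (lollipop (2 * l) l) l 2 (fun v ↦ v.val % l + 1) := by
  refine ⟨⟨.inr (range_mod_add_one hl), fun u v huv h ↦ ?_⟩,
    fun k hk1 hk2 ↦ card_mod_add_one_eq hk1 hk2⟩
  beta_reduce at h ⊢
  rcases lt_or_gt_of_ne huv with hlt | hgt
  · exact lollipop.dist_of_mod_eq hlt (by omega)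
  · rw [SimpleGraph.dist_comm, h]
    exact lollipop.dist_of_mod_eq hgt (by omega)

end TwinLabeling

theorem exists_graph_two_regular_distance_labeling (l : ℕ) (hl : 0 < l) :
    ∃ G : SimpleGraph (Fin (2 * l)), G.Connected ∧
      G.edgeSet.ncard = (l + 2) * (l + 1) / 2 - 2 ∧
      ∃ f : Fin (2 * l) → ℕ, IsRegularDistLabeling G l 2 f := by
  refine ⟨lollipop (2 * l) l, lollipop.connected (by omega), ?_, _,
    lollipop.isRegularDistLabeling_mod_add_one hl⟩
  have hedges := lollipop.two_mul_card_edgeFinset (show l < 2 * l by omega)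
  have hsum : (l + 2) * (l + 1) = l * (l + 1) + 2 * (l + 1) := by ring
  rw [← SimpleGraph.coe_edgeFinset, Set.ncard_coe_finset]
  omega
end

section
/- Let Σ = {s_1 < s_2 < … < s_l} be a finite set of positive integers with s_1 = 1 and s_i − s_{i−1} ≤ 2 for all 2 ≤ i ≤ l. Then Σ is a δ-set; moreover, there exists a tree of order 2l that admits a regular distance Σ-labeling of degree 2. -/
/-- `f` is a proper distance `J`-labeling of `G`: `f` is a surjection onto `J`, any two
distinct vertices sharing a label `k` are at graph distance exactly `k`, and every nonzero
label of `J` is used by at least two vertices. -/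
def IsProperSetLabeling {V : Type*} (G : SimpleGraph V) (J : Finset ℕ) (f : V → ℕ) : Prop :=
  (∀ v : V, f v ∈ J) ∧ (∀ j ∈ J, ∃ v : V, f v = j) ∧
    (∀ u v : V, u ≠ v → f u = f v → G.dist u v = f u) ∧
    (∀ j ∈ J, j ≠ 0 → ∃ u v : V, u ≠ v ∧ f u = j ∧ f v = j)

/-- A finite set `S` of nonnegative integers is a δ-set if some finite connected simple
graph admits a proper distance `S`-labeling. -/
def IsDeltaSet (S : Finset ℕ) : Prop :=
  ∃ (V : Type) (_ : Fintype V) (G : SimpleGraph V),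
    G.Connected ∧ ∃ f : V → ℕ, IsProperSetLabeling G S f

/-!
Write `s 0 < s 1 < ⋯ < s (l - 1)` for the elements of `S` and `d j = s j - j`; the gap condition
says that `d 0 = 1` and that `d` grows by at most one at each step, so `d` takes every value between
`1` and `d j` at indices up to `j`. Hence there is a tree rooted at `0` consisting of the path
`0 - 2 - 4 - ⋯` on one side and, on the other side, the odd vertices `2j + 1` at depth `d j`.
Label `2j` and `2j + 1` by `s j`. The walk through the root gives `dist (2j) (2j + 1) ≤ j + d j = s j`;
conversely the depth, counted negatively on the path side, changes by at most one along an edge and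
differs by `j + d j` between `2j` and `2j + 1`.
-/

open SimpleGraph Finset

theorem Nat.exists_le_eq_of_succ_le_add_one {d : ℕ → ℕ} {n m : ℕ}
    (hstep : ∀ i < n, d (i + 1) ≤ d i + 1) (h0 : d 0 ≤ m) (hm : m ≤ d n) :
    ∃ k ≤ n, d k = m := by
  induction n with
  | zero => exact ⟨0, le_rfl, le_antisymm h0 hm⟩
  | succ n ih =>
    rcases le_or_gt m (d n) with h | h
    · obtain ⟨k, hk, rfl⟩ := ih (fun i hi => hstep i (by omega)) h
      exact ⟨k, by omega, rfl⟩
    · exact ⟨n + 1, le_rfl, by have := hstep n (by omega); omega⟩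

namespace SimpleGraph

variable {V : Type*}

theorem Walk.abs_sub_le_length {G : SimpleGraph V} {φ : V → ℤ}
    (hφ : ∀ u v, G.Adj u v → |φ u - φ v| ≤ 1) {u v : V} (w : G.Walk u v) :
    |φ u - φ v| ≤ w.length := by
  induction w with
  | nil => simp
  | cons hadj _ ih =>
    rw [Walk.length_cons, Nat.cast_succ]
    exact (abs_sub_le _ _ _).trans (by linarith [hφ _ _ hadj])

theorem Reachable.abs_sub_le_dist {G : SimpleGraph V} {φ : V → ℤ}
    (hφ : ∀ u v, G.Adj u v → |φ u - φ v| ≤ 1) {u v : V} (hr : G.Reachable u v) :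
    |φ u - φ v| ≤ G.dist u v := by
  obtain ⟨w, hw⟩ := hr.exists_walk_length_eq_dist
  exact hw ▸ w.abs_sub_le_length hφ

def parentGraph (p : V → V) : SimpleGraph V :=
  fromRel fun u v => p u = v

section parentGraph

variable {p : V → V} {r : V} {h : V → ℕ}

theorem parentGraph_adj {u v : V} : (parentGraph p).Adj u v ↔ u ≠ v ∧ (p u = v ∨ p v = u) :=
  fromRel_adj _ u v

theorem parentGraph_adj_parent (hh : ∀ v ≠ r, h (p v) < h v) {v : V} (hv : v ≠ r) :
    (parentGraph p).Adj v (p v) :=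
  parentGraph_adj.2 ⟨fun hvp => (hh v hv).ne (congrArg h hvp.symm), Or.inl rfl⟩

theorem exists_walk_parentGraph_length_le (hh : ∀ v ≠ r, h (p v) < h v) (v : V) :
    ∃ w : (parentGraph p).Walk v r, w.length ≤ h v := by
  induction v using (measure h).wf.induction with
  | _ v ih =>
    by_cases hv : v = r
    · subst hv
      exact ⟨.nil, Nat.zero_le _⟩
    · obtain ⟨w, hw⟩ := ih (p v) (hh v hv)
      refine ⟨.cons (parentGraph_adj_parent hh hv) w, ?_⟩
      have := hh v hv
      rw [Walk.length_cons]
      omega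

theorem parentGraph_connected (hh : ∀ v ≠ r, h (p v) < h v) : (parentGraph p).Connected := by
  refine (connected_iff_exists_forall_reachable _).2 ⟨r, fun v => ?_⟩
  obtain ⟨w, -⟩ := exists_walk_parentGraph_length_le hh v
  exact w.reachable.symm

theorem parentGraph_dist_le (hh : ∀ v ≠ r, h (p v) < h v) (v : V) :
    (parentGraph p).dist v r ≤ h v := by
  obtain ⟨w, hw⟩ := exists_walk_parentGraph_length_le hh v
  exact (dist_le w).trans hw

theorem parentGraph_edgeSet (hr : p r = r) (hh : ∀ v ≠ r, h (p v) < h v) :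
    (parentGraph p).edgeSet = (fun v => s(v, p v)) '' {r}ᶜ := by
  refine Set.ext (Sym2.ind fun u v => ?_)
  simp only [mem_edgeSet, Set.mem_image, Set.mem_compl_singleton_iff]
  constructor
  · intro hadj
    rcases parentGraph_adj.1 hadj with ⟨huv, rfl | rfl⟩
    · exact ⟨u, fun hu => huv (by subst hu; exact hr.symm), rfl⟩
    · exact ⟨v, fun hv => huv (by subst hv; exact hr), Sym2.eq_swap⟩
  · rintro ⟨x, hx, hxe⟩
    rw [← mem_edgeSet, ← hxe]
    exact parentGraph_adj_parent hh hx

theorem parentGraph_isTree [Finite V] (hr : p r = r) (hh : ∀ v ≠ r, h (p v) < h v) :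
    (parentGraph p).IsTree := by
  have hinj : Set.InjOn (fun v => s(v, p v)) {r}ᶜ := by
    intro v hv w hw hvw
    rcases Sym2.eq_iff.1 hvw with ⟨hvw, -⟩ | ⟨rfl, hpv⟩
    · exact hvw
    · have h1 := hh _ hv
      have h2 := hh _ hw
      rw [hpv] at h1
      omega
  refine isTree_iff_connected_and_card.2 ⟨parentGraph_connected hh, ?_⟩
  rw [Nat.card_coe_set_eq, parentGraph_edgeSet hr hh, hinj.ncard_image, Set.compl_eq_univ_sdiff,
    Set.ncard_sdiff_singleton_add_one (Set.mem_univ r), Set.ncard_univ]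

theorem abs_sub_le_one_of_parentGraph_adj {φ : V → ℤ} (hφ : ∀ v, |φ v - φ (p v)| ≤ 1) {u v : V}
    (huv : (parentGraph p).Adj u v) : |φ u - φ v| ≤ 1 := by
  rcases (parentGraph_adj.1 huv).2 with rfl | rfl
  · exact hφ u
  · rw [abs_sub_comm]
    exact hφ v

end parentGraph

end SimpleGraph

/-- Parent map of the tree rooted at `0` in which the even vertices form the path `0 - 2 - 4 - ⋯`
and the odd vertex `2j + 1` hangs below some `2k + 1` with `d k + 1 = d j`, or below the root when
there is none. -/
def pairTreeParent (d : ℕ → ℕ) (l : ℕ) (v : Fin (2 * l)) : Fin (2 * l) :=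
  if (v : ℕ) % 2 = 0 then ⟨v - 2, by have := v.isLt; omega⟩
  else if h : ∃ k < (v : ℕ) / 2, d k + 1 = d (v / 2) then
    ⟨2 * Nat.find h + 1, by have := Nat.find_spec h; have := v.isLt; omega⟩
  else ⟨0, by have := v.isLt; omega⟩

def pairTree (d : ℕ → ℕ) (l : ℕ) : SimpleGraph (Fin (2 * l)) :=
  parentGraph (pairTreeParent d l)

def pairTreeDepth (d : ℕ → ℕ) (n : ℕ) : ℕ :=
  if n % 2 = 0 then n / 2 else d (n / 2)

def pairTreePotential (d : ℕ → ℕ) (n : ℕ) : ℤ :=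
  if n % 2 = 0 then -(n / 2 : ℕ) else d (n / 2)

@[simp]
theorem pairTreeDepth_two_mul (d : ℕ → ℕ) (k : ℕ) : pairTreeDepth d (2 * k) = k := by
  rw [pairTreeDepth, if_pos (by omega), Nat.mul_div_cancel_left k two_pos]

@[simp]
theorem pairTreeDepth_two_mul_add_one (d : ℕ → ℕ) (k : ℕ) : pairTreeDepth d (2 * k + 1) = d k := by
  rw [pairTreeDepth, if_neg (by omega), show (2 * k + 1) / 2 = k by omega]

@[simp]
theorem pairTreePotential_two_mul (d : ℕ → ℕ) (k : ℕ) : pairTreePotential d (2 * k) = -k := by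
  rw [pairTreePotential, if_pos (by omega), Nat.mul_div_cancel_left k two_pos]

@[simp]
theorem pairTreePotential_two_mul_add_one (d : ℕ → ℕ) (k : ℕ) :
    pairTreePotential d (2 * k + 1) = d k := by
  rw [pairTreePotential, if_neg (by omega), show (2 * k + 1) / 2 = k by omega]

section pairTree

variable {d : ℕ → ℕ} {l : ℕ}

theorem pairTreeDepth_parent_lt (hpos : ∀ j < l, 0 < d j) (hl : 0 < l) (v : Fin (2 * l))
    (hv : v ≠ ⟨0, by omega⟩) :
    pairTreeDepth d (pairTreeParent d l v) < pairTreeDepth d v := by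
  have hv0 : (v : ℕ) ≠ 0 := fun h0 => hv (Fin.ext h0)
  unfold pairTreeParent
  split_ifs with hev hk
  · simp only [pairTreeDepth, hev, show ((v : ℕ) - 2) % 2 = 0 by omega, ↓reduceIte]
    omega
  · rw [pairTreeDepth_two_mul_add_one]
    simp only [pairTreeDepth, hev, ↓reduceIte]
    have := Nat.find_spec hk
    omega
  · simp only [pairTreeDepth, hev, ↓reduceIte]
    exact hpos _ (by omega)

theorem abs_pairTreePotential_sub_parent_le (hd0 : d 0 = 1) (hpos : ∀ j < l, 0 < d j)
    (hstep : ∀ j, j + 1 < l → d (j + 1) ≤ d j + 1) (v : Fin (2 * l)) :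
    |pairTreePotential d v - pairTreePotential d (pairTreeParent d l v)| ≤ 1 := by
  unfold pairTreeParent
  split_ifs with hev hk
  · simp only [pairTreePotential, hev, show ((v : ℕ) - 2) % 2 = 0 by omega, ↓reduceIte]
    rw [abs_le]
    omega
  · rw [pairTreePotential_two_mul_add_one]
    simp only [pairTreePotential, hev, ↓reduceIte]
    have := Nat.find_spec hk
    rw [abs_le]
    omega
  · have hd : d (v / 2) ≤ 1 := by
      by_contra! hd
      obtain ⟨k, hk', hdk⟩ := Nat.exists_le_eq_of_succ_le_add_one (n := v / 2) (m := d (v / 2) - 1)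
        (fun i hi => hstep i (by omega)) (by omega) (by omega)
      exact hk ⟨k, lt_of_le_of_ne hk' (by rintro rfl; omega), by omega⟩
    have := hpos (v / 2) (by omega)
    simp only [pairTreePotential, hev, ↓reduceIte]
    rw [abs_le]
    omega

theorem pairTree_isTree (hpos : ∀ j < l, 0 < d j) (hl : 0 < l) : (pairTree d l).IsTree :=
  parentGraph_isTree (r := ⟨0, by omega⟩) (h := fun v => pairTreeDepth d v)
    (by simp [pairTreeParent])
    (pairTreeDepth_parent_lt hpos hl)

theorem pairTree_dist (hd0 : d 0 = 1) (hpos : ∀ j < l, 0 < d j)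
    (hstep : ∀ j, j + 1 < l → d (j + 1) ≤ d j + 1) {j : ℕ} (hj : j < l) :
    (pairTree d l).dist ⟨2 * j, by omega⟩ ⟨2 * j + 1, by omega⟩ = j + d j := by
  have hh := pairTreeDepth_parent_lt (d := d) hpos (by omega)
  have hconn : (pairTree d l).Connected :=
    parentGraph_connected (h := fun v => pairTreeDepth d v) hh
  have hdepth (w : Fin (2 * l)) : (pairTree d l).dist w ⟨0, by omega⟩ ≤ pairTreeDepth d w :=
    parentGraph_dist_le (h := fun v : Fin (2 * l) => pairTreeDepth d v) hh w
  have hφ (x y : Fin (2 * l)) (hxy : (pairTree d l).Adj x y) :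
      |pairTreePotential d x - pairTreePotential d y| ≤ 1 :=
    abs_sub_le_one_of_parentGraph_adj (φ := fun v : Fin (2 * l) => pairTreePotential d v)
      (abs_pairTreePotential_sub_parent_le hd0 hpos hstep) hxy
  apply le_antisymm
  · have h1 := hdepth ⟨2 * j, by omega⟩
    have h2 := hdepth ⟨2 * j + 1, by omega⟩
    have h3 := hconn.dist_triangle (u := ⟨2 * j, by omega⟩) (v := ⟨0, by omega⟩)
      (w := ⟨2 * j + 1, by omega⟩)
    rw [SimpleGraph.dist_comm] at h2
    simp only [pairTreeDepth_two_mul, pairTreeDepth_two_mul_add_one] at h1 h2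
    omega
  · have := (hconn ⟨2 * j, by omega⟩ ⟨2 * j + 1, by omega⟩).abs_sub_le_dist hφ
    simp only [pairTreePotential_two_mul, pairTreePotential_two_mul_add_one] at this
    rw [abs_le] at this
    omega

end pairTree

section pairLabel

variable {l : ℕ} {s : ℕ → ℕ}

theorem filter_pairLabel_eq (hs : Set.InjOn s (Set.Iio l)) {j : ℕ} (hj : j < l) :
    ({v : Fin (2 * l) | s ((v : ℕ) / 2) = s j} : Finset _) =
      {⟨2 * j, by omega⟩, ⟨2 * j + 1, by omega⟩} := by
  ext v
  simp only [mem_filter, mem_univ, true_and, mem_insert, mem_singleton, Fin.ext_iff]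
  constructor
  · intro hv
    have := hs (Set.mem_Iio.2 (by omega : (v : ℕ) / 2 < l)) hj hv
    omega
  · rintro (hv | hv) <;> rw [hv] <;> congr 1 <;> omega

theorem card_filter_pairLabel (hs : Set.InjOn s (Set.Iio l)) {j : ℕ} (hj : j < l) :
    #{v : Fin (2 * l) | s ((v : ℕ) / 2) = s j} = 2 := by
  rw [filter_pairLabel_eq hs hj, card_pair]
  simp [Fin.ext_iff]

theorem isProperSetLabeling_pairLabel {G : SimpleGraph (Fin (2 * l))} {S : Finset ℕ}
    (hs : Set.InjOn s (Set.Iio l)) (hS : s '' Set.Iio l = S)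
    (hdist : ∀ j (hj : j < l), G.dist ⟨2 * j, by omega⟩ ⟨2 * j + 1, by omega⟩ = s j) :
    IsProperSetLabeling G S fun v => s ((v : ℕ) / 2) := by
  have hmem {x : ℕ} : x ∈ S ↔ ∃ j < l, s j = x := by
    rw [← mem_coe, ← hS]
    rfl
  refine ⟨fun v => hmem.2 ⟨_, by omega, rfl⟩, fun x hx => ?_, fun u v huv hfuv => ?_,
    fun x hx _ => ?_⟩
  · obtain ⟨j, hj, rfl⟩ := hmem.1 hx
    exact ⟨⟨2 * j, by omega⟩, by simp⟩
  · obtain ⟨j, hj, hju⟩ : ∃ j < l, s ((u : ℕ) / 2) = s j := ⟨_, by omega, rfl⟩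
    have hu : u ∈ ({v : Fin (2 * l) | s ((v : ℕ) / 2) = s j} : Finset _) := by simpa using hju
    have hv : v ∈ ({v : Fin (2 * l) | s ((v : ℕ) / 2) = s j} : Finset _) := by
      simpa [← hfuv] using hju
    rw [filter_pairLabel_eq hs hj, mem_insert, mem_singleton] at hu hv
    simp only [hju]
    rcases hu with rfl | rfl <;> rcases hv with rfl | rfl
    · exact absurd rfl huv
    · exact hdist j hj
    · rw [SimpleGraph.dist_comm]
      exact hdist j hj
    · exact absurd rfl huv
  · obtain ⟨j, hj, rfl⟩ := hmem.1 hx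
    exact ⟨⟨2 * j, by omega⟩, ⟨2 * j + 1, by omega⟩, by simp [Fin.ext_iff], by simp,
      by simp [show (2 * j + 1) / 2 = j by omega]⟩

end pairLabel

namespace Finset

variable {S : Finset ℕ}

theorem nth_zero_eq_min' (hne : S.Nonempty) : Nat.nth (· ∈ S) 0 = S.min' hne := by
  rw [Nat.nth_zero]
  exact hne.csInf_eq_min'

theorem add_one_le_nth {hne : S.Nonempty} (hmin : S.min' hne = 1) {j : ℕ} (hj : j < #S) :
    j + 1 ≤ Nat.nth (· ∈ S) j := by
  have hf : (Set.ofPred (· ∈ S)).Finite := S.finite_toSet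
  have hcard : #hf.toFinset = #S := by simp
  induction j with
  | zero => rw [nth_zero_eq_min' hne, hmin]
  | succ j ih =>
    have := Nat.nth_lt_nth_of_lt_card hf (lt_add_one j) (by omega)
    have := ih (by omega)
    omega

theorem nth_add_one_le_add_two (hne : S.Nonempty)
    (hgap : ∀ a ∈ S, a < S.max' hne → ∃ b ∈ S, a < b ∧ b ≤ a + 2) {j : ℕ} (hj : j + 1 < #S) :
    Nat.nth (· ∈ S) (j + 1) ≤ Nat.nth (· ∈ S) j + 2 := by
  have hf : (Set.ofPred (· ∈ S)).Finite := S.finite_toSet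
  have hcard : #hf.toFinset = #S := by simp
  have hlt := Nat.nth_lt_nth_of_lt_card hf (lt_add_one j) (by omega)
  have hmem : Nat.nth (· ∈ S) j ∈ S := Nat.nth_mem_of_lt_card hf (by omega)
  have hmax : Nat.nth (· ∈ S) (j + 1) ≤ S.max' hne :=
    S.le_max' _ (Nat.nth_mem_of_lt_card hf (by omega))
  obtain ⟨b, hb, hjb, hb2⟩ := hgap _ hmem (hlt.trans_le hmax)
  obtain ⟨i, hi, rfl⟩ := Nat.exists_lt_card_finite_nth_eq hf hb
  have hji := Nat.lt_of_nth_lt_nth_of_lt_card hf hjb (by omega)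
  exact (Nat.nth_le_nth_of_lt_card hf (show j + 1 ≤ i by omega) hi).trans hb2

end Finset

theorem deltaSet_of_gaps_le_two_general (S : Finset ℕ) (hne : S.Nonempty)
    (hmin : S.min' hne = 1)
    (hgap : ∀ a ∈ S, a < S.max' hne → ∃ b ∈ S, a < b ∧ b ≤ a + 2) :
    IsDeltaSet S ∧
      ∃ G : SimpleGraph (Fin (2 * S.card)), G.IsTree ∧
        ∃ f : Fin (2 * S.card) → ℕ, IsProperSetLabeling G S f ∧
          ∀ s ∈ S, s ≠ 0 →
            (Finset.univ.filter (fun v : Fin (2 * S.card) => f v = s)).card = 2 := by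
  set s := Nat.nth (· ∈ S)
  have hf : (Set.ofPred (· ∈ S)).Finite := S.finite_toSet
  have hcard : #hf.toFinset = #S := by simp
  have hinj : Set.InjOn s (Set.Iio #S) := hcard ▸ Nat.nth_injOn hf
  have himage : s '' Set.Iio #S = S := hcard ▸ Nat.image_nth_Iio_card hf
  have hle (j : ℕ) (hj : j < #S) : j + 1 ≤ s j := add_one_le_nth hmin hj
  have hpos (j : ℕ) (hj : j < #S) : 0 < s j - j := by have := hle j hj; omega
  have htree := pairTree_isTree hpos hne.card_pos
  have hdist (j : ℕ) (hj : j < #S) :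
      (pairTree (fun i => s i - i) #S).dist ⟨2 * j, by omega⟩ ⟨2 * j + 1, by omega⟩ = s j := by
    rw [pairTree_dist (by simp [s, nth_zero_eq_min' hne, hmin]) hpos (fun i hi => ?_) hj]
    · have := hle j hj
      omega
    · have := hle i (by omega)
      have : s (i + 1) ≤ s i + 2 := nth_add_one_le_add_two hne hgap hi
      omega
  have hlab := isProperSetLabeling_pairLabel hinj himage hdist
  refine ⟨⟨_, inferInstance, _, htree.connected, _, hlab⟩, _, htree, _, hlab, fun x hx _ => ?_⟩
  obtain ⟨j, hj, rfl⟩ : x ∈ s '' Set.Iio #S := himage ▸ hx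
  exact card_filter_pairLabel hinj hj

theorem deltaSet_of_gaps_le_two (S : Finset ℕ) (hne : S.Nonempty)
    (hpos : ∀ s ∈ S, 0 < s) (hmin : S.min' hne = 1)
    (hgap : ∀ a ∈ S, a < S.max' hne → ∃ b ∈ S, a < b ∧ b ≤ a + 2) :
    IsDeltaSet S ∧
      ∃ G : SimpleGraph (Fin (2 * S.card)), G.IsTree ∧
        ∃ f : Fin (2 * S.card) → ℕ, IsProperSetLabeling G S f ∧
          ∀ s ∈ S, s ≠ 0 →
            (Finset.univ.filter (fun v : Fin (2 * S.card) => f v = s)).card = 2 :=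
  deltaSet_of_gaps_le_two_general S hne hmin hgap
end

section
/- Let k_1 < k_2 < … < k_n be positive integers and let d be any positive integer. Then there exists a δ-set Σ = {s_1 < s_2 < … < s_l} with s_1 = d and a set of indices 1 ≤ j_1 < j_2 < … < j_n with j_n < l−1 such that s_{j_i + 1} − s_{j_i} = k_i for every i ∈ {1,…,n}. -/
/-!
A list of labels in which every label occurs exactly twice, with its two occurrences that many
positions apart (a Skolem-type sequence), is a proper distance labeling of the path on its
positions. Placing each label `s ∈ [m+1, 2m]` at positions `s, 2s` and each `s ∈ [2m+1, 3m+1]`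
at positions `s - (2m+1), 2s - (2m+1)` gives such a sequence of length `4m + 2` whose labels form
the interval `[m+1, 3m+1]`. Concatenating these blocks for `m₀ = d - 1` and
`mₜ₊₁ = 3 mₜ + kₜ₊₁` keeps the label sets disjoint, so `⋃ₜ [mₜ + 1, 3 mₜ + 1]` is a δ-set with
minimum `d`, and its consecutive elements `3 mₜ + 1 < mₜ₊₁ + 1` differ by `kₜ₊₁`.
-/

open SimpleGraph

namespace SimpleGraph

lemma pathGraph_val_le_val_add_length {n : ℕ} {u v : Fin n} (w : (pathGraph n).Walk u v) :
    (v : ℕ) ≤ u + w.length := by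
  induction w with
  | nil => simp
  | cons h _ ih =>
    rw [pathGraph_adj] at h
    rw [Walk.length_cons]
    omega

lemma pathGraph_dist_le_of_val_eq_add {n : ℕ} : ∀ (m : ℕ) {u v : Fin n}, (v : ℕ) = u + m →
    (pathGraph n).dist u v ≤ m
  | 0, u, v, h => by simp [Fin.ext h]
  | m + 1, u, v, h => by
    let w : Fin n := ⟨u + m, by omega⟩
    have hwv : (pathGraph n).Adj w v := pathGraph_adj.2 (Or.inl h.symm)
    calc (pathGraph n).dist u v ≤ (pathGraph n).dist u w + (pathGraph n).dist w v :=
          (pathGraph_preconnected n u w).dist_triangle_left v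
      _ ≤ m + 1 := by
          rw [dist_eq_one_iff_adj.2 hwv]
          exact Nat.add_le_add_right (pathGraph_dist_le_of_val_eq_add m rfl) 1

theorem pathGraph_dist_of_le {n : ℕ} {u v : Fin n} (h : u ≤ v) :
    (pathGraph n).dist u v = (v : ℕ) - u := by
  refine le_antisymm (pathGraph_dist_le_of_val_eq_add _ (by omega)) ?_
  obtain ⟨w, hw⟩ := (pathGraph_preconnected n u v).exists_walk_length_eq_dist
  have := pathGraph_val_le_val_add_length w
  omega

end SimpleGraph

def IsSkolemType (L : List ℕ) : Prop :=
  (∀ p q (hp : p < L.length) (hq : q < L.length), p < q → L[p] = L[q] → p + L[p] = q) ∧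
    ∀ p (hp : p < L.length), ∃ q, ∃ hq : q < L.length, q ≠ p ∧ L[q] = L[p]

namespace IsSkolemType

variable {L L₁ L₂ : List ℕ}

theorem isDeltaSet (h : IsSkolemType L) (hL : L ≠ []) : IsDeltaSet L.toFinset := by
  have hconn : (pathGraph L.length).Connected :=
    (connected_iff _).2 ⟨pathGraph_preconnected _, ⟨⟨0, List.length_pos_iff.2 hL⟩⟩⟩
  refine ⟨Fin L.length, inferInstance, pathGraph L.length, hconn, fun v => L[(v : ℕ)],
    fun v => List.mem_toFinset.2 (List.getElem_mem _), fun j hj => ?_, fun u v huv heq => ?_,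
    fun j hj _ => ?_⟩
  · obtain ⟨p, hp, rfl⟩ := List.mem_iff_getElem.1 (List.mem_toFinset.1 hj)
    exact ⟨⟨p, hp⟩, rfl⟩
  · dsimp only at heq ⊢
    rcases lt_or_gt_of_ne huv with huv | huv
    · have := h.1 u v u.2 v.2 huv heq
      rw [pathGraph_dist_of_le huv.le]
      omega
    · have := h.1 v u v.2 u.2 huv heq.symm
      rw [SimpleGraph.dist_comm, pathGraph_dist_of_le huv.le]
      omega
  · obtain ⟨p, hp, rfl⟩ := List.mem_iff_getElem.1 (List.mem_toFinset.1 hj)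
    obtain ⟨q, hq, hqp, hpq⟩ := h.2 p hp
    exact ⟨⟨p, hp⟩, ⟨q, hq⟩, fun h => hqp (congrArg Fin.val h).symm, rfl, hpq⟩

theorem append (h₁ : IsSkolemType L₁) (h₂ : IsSkolemType L₂) (hdisj : L₁.Disjoint L₂) :
    IsSkolemType (L₁ ++ L₂) := by
  have hne : ∀ p q (hp : p < L₁.length) (hq : q < L₂.length), L₁[p] ≠ L₂[q] :=
    fun p q hp hq he => hdisj (List.getElem_mem hp) (he ▸ List.getElem_mem hq)
  refine ⟨fun p q hp hq hpq he => ?_, fun p hp => ?_⟩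
  · simp only [List.length_append] at hp hq
    simp only [List.getElem_append] at he ⊢
    split_ifs at he ⊢ with hp₁ hq₁ hq₁
    · exact h₁.1 p q hp₁ hq₁ hpq he
    · exact absurd he (hne _ _ _ _)
    · omega
    · have := h₂.1 (p - L₁.length) (q - L₁.length) (by omega) (by omega) (by omega) he
      omega
  · simp only [List.length_append] at hp
    by_cases hp₁ : p < L₁.length
    · obtain ⟨q, hq, hqp, he⟩ := h₁.2 p hp₁
      refine ⟨q, by simp only [List.length_append]; omega, hqp, ?_⟩
      rwa [List.getElem_append_left hq, List.getElem_append_left hp₁]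
    · obtain ⟨q, hq, hqp, he⟩ := h₂.2 (p - L₁.length) (by omega)
      refine ⟨q + L₁.length, by simp only [List.length_append]; omega, by omega, ?_⟩
      rw [List.getElem_append_right (by omega), List.getElem_append_right (not_lt.1 hp₁)]
      simpa using he

end IsSkolemType

def langfordEntry (m p : ℕ) : ℕ :=
  if p ≤ m then 2 * m + 1 + p
  else if p ≤ 2 * m then p
  else if p % 2 = 1 then (p + 2 * m + 1) / 2
  else p / 2

def langfordBlock (m : ℕ) : List ℕ := (List.range (4 * m + 2)).map (langfordEntry m)

theorem isSkolemType_langfordBlock (m : ℕ) : IsSkolemType (langfordBlock m) := by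
  simp only [IsSkolemType, langfordBlock, List.length_map, List.length_range, List.getElem_map,
    List.getElem_range, langfordEntry]
  refine ⟨fun p q hp hq hpq he => ?_, fun p hp => ?_⟩
  · split_ifs at he ⊢ <;> omega
  · refine ⟨if p ≤ m then 2 * m + 1 + 2 * p else if p ≤ 2 * m then 2 * p
      else if p % 2 = 1 then (p - 2 * m - 1) / 2 else p / 2, ?_, ?_, ?_⟩ <;>
    split_ifs <;> omega

theorem mem_langfordBlock {m x : ℕ} : x ∈ langfordBlock m ↔ m + 1 ≤ x ∧ x ≤ 3 * m + 1 := by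
  simp only [langfordBlock, List.mem_map, List.mem_range, langfordEntry]
  constructor
  · rintro ⟨p, hp, rfl⟩
    split_ifs <;> omega
  · rintro ⟨hx₁, hx₂⟩
    refine ⟨if x ≤ 2 * m then x else x - (2 * m + 1), ?_, ?_⟩ <;> split_ifs <;> omega

def langfordChain (m : ℕ → ℕ) (n : ℕ) : List ℕ :=
  (List.range (n + 1)).flatMap fun t => langfordBlock (m t)

theorem mem_langfordChain {m : ℕ → ℕ} {n x : ℕ} :
    x ∈ langfordChain m n ↔ ∃ t ≤ n, m t + 1 ≤ x ∧ x ≤ 3 * m t + 1 := by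
  simp [langfordChain, mem_langfordBlock]

theorem langfordChain_ne_nil (m : ℕ → ℕ) (n : ℕ) : langfordChain m n ≠ [] :=
  List.ne_nil_of_mem (mem_langfordChain.2 ⟨0, n.zero_le, le_rfl, by omega⟩)

section
variable {m : ℕ → ℕ}

theorem strictMono_of_three_mul_lt (hm : ∀ t, 3 * m t < m (t + 1)) : StrictMono m :=
  strictMono_nat_of_lt_succ fun t => by have := hm t; omega

theorem isSkolemType_langfordChain (hm : ∀ t, 3 * m t < m (t + 1)) (n : ℕ) :
    IsSkolemType (langfordChain m n) := by
  induction n with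
  | zero => simpa [langfordChain] using isSkolemType_langfordBlock (m 0)
  | succ n ih =>
    have hsplit : langfordChain m (n + 1) = langfordChain m n ++ langfordBlock (m (n + 1)) := by
      simp [langfordChain, List.range_succ, List.flatMap_append]
    rw [hsplit]
    refine ih.append (isSkolemType_langfordBlock _) fun x hx hx' => ?_
    obtain ⟨t, ht, -, hxt⟩ := mem_langfordChain.1 hx
    have := (strictMono_of_three_mul_lt hm).monotone ht
    have := hm n
    have := mem_langfordBlock.1 hx'
    omega

theorem le_of_mem_langfordChain (hm : ∀ t, 3 * m t < m (t + 1)) {n x : ℕ}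
    (hx : x ∈ langfordChain m n) : m 0 + 1 ≤ x := by
  obtain ⟨t, -, hxt, -⟩ := mem_langfordChain.1 hx
  have := (strictMono_of_three_mul_lt hm).monotone t.zero_le
  omega

theorem le_of_mem_langfordChain_of_lt (hm : ∀ t, 3 * m t < m (t + 1)) {n t y : ℕ}
    (hy : y ∈ langfordChain m n) (hty : 3 * m t + 1 < y) : m (t + 1) + 1 ≤ y := by
  obtain ⟨u, -, hyu, hyu'⟩ := mem_langfordChain.1 hy
  have hmono := (strictMono_of_three_mul_lt hm).monotone
  rcases le_or_gt u t with hut | hut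
  · have := hmono hut
    omega
  · have := hmono (show t + 1 ≤ u by omega)
    omega

end

def langfordParams (m₀ : ℕ) (g : ℕ → ℕ) : ℕ → ℕ
  | 0 => m₀
  | t + 1 => 3 * langfordParams m₀ g t + g t

theorem three_mul_lt_langfordParams_succ {m₀ : ℕ} {g : ℕ → ℕ} (hg : ∀ t, 0 < g t) (t : ℕ) :
    3 * langfordParams m₀ g t < langfordParams m₀ g (t + 1) :=
  Nat.lt_add_of_pos_right (hg t)

namespace Finset

variable {α : Type*} [LinearOrder α] {s : Finset α} {a b : α}

theorem sort_eq_sort_filter_lt_append (s : Finset α) (a : α) :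
    s.sort = {y ∈ s | y < a}.sort ++ {y ∈ s | a ≤ y}.sort := by
  have hnodup : ({y ∈ s | y < a}.sort ++ {y ∈ s | a ≤ y}.sort).Nodup :=
    (sort_nodup _ _).append (sort_nodup _ _) fun x hx hx' => by
      simp only [mem_sort, mem_filter] at hx hx'
      exact absurd hx.2 (not_lt.2 hx'.2)
  have hsorted : ({y ∈ s | y < a}.sort ++ {y ∈ s | a ≤ y}.sort).Pairwise (· ≤ ·) :=
    List.pairwise_append.2 ⟨pairwise_sort _ _, pairwise_sort _ _, fun x hx y hy => by
      simp only [mem_sort, mem_filter] at hx hy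
      exact (hx.2.trans_le hy.2).le⟩
  have hset : ({y ∈ s | y < a}.sort ++ {y ∈ s | a ≤ y}.sort).toFinset = s := by
    ext y
    simp only [List.mem_toFinset, List.mem_append, mem_sort, mem_filter]
    have := lt_or_ge y a
    tauto
  conv_lhs => rw [← hset]
  exact (List.toFinset_sort _ hnodup).2 hsorted

theorem getD_sort_card_filter_lt (ha : a ∈ s) (d : α) : s.sort.getD #{y ∈ s | y < a} d = a := by
  have hne : {y ∈ s | a ≤ y}.Nonempty := ⟨a, mem_filter.2 ⟨ha, le_rfl⟩⟩
  rw [sort_eq_sort_filter_lt_append s a, List.getD_append_right _ _ _ _ (length_sort _).le,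
    length_sort, Nat.sub_self, List.getD_eq_getElem _ _ (by simpa using hne.card_pos),
    sorted_zero_eq_min']
  exact le_antisymm (min'_le _ _ (mem_filter.2 ⟨ha, le_rfl⟩))
    (le_min' _ _ _ fun y hy => (mem_filter.1 hy).2)

theorem card_filter_lt_eq_add_one (ha : a ∈ s) (hab : a < b) (hgap : ∀ y ∈ s, a < y → b ≤ y) :
    #{y ∈ s | y < b} = #{y ∈ s | y < a} + 1 := by
  have : {y ∈ s | y < b} = insert a {y ∈ s | y < a} := by
    ext y
    simp only [mem_filter, mem_insert]
    constructor
    · rintro ⟨hy, hyb⟩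
      rcases lt_trichotomy y a with h | h | h
      exacts [Or.inr ⟨hy, h⟩, Or.inl h, absurd (hgap y hy h) (not_le.2 hyb)]
    · rintro (rfl | ⟨hy, hya⟩)
      exacts [⟨ha, hab⟩, ⟨hy, hya.trans hab⟩]
  rw [this, card_insert_of_notMem (by simp)]

theorem getD_sort_card_filter_lt_sub_one (ha : a ∈ s) (hab : a < b)
    (hgap : ∀ y ∈ s, a < y → b ≤ y) (d : α) : s.sort.getD (#{y ∈ s | y < b} - 1) d = a := by
  rw [card_filter_lt_eq_add_one ha hab hgap, Nat.add_sub_cancel, getD_sort_card_filter_lt ha]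

theorem card_filter_lt_lt_card_filter_lt (ha : a ∈ s) (hab : a < b) :
    #{y ∈ s | y < a} < #{y ∈ s | y < b} :=
  card_lt_card <| (ssubset_iff_of_subset fun y hy => by
    simp only [mem_filter] at hy ⊢
    exact ⟨hy.1, hy.2.trans hab⟩).2 ⟨a, mem_filter.2 ⟨ha, hab⟩, by simp⟩

theorem card_filter_lt_lt_card (ha : a ∈ s) : #{y ∈ s | y < a} < #s :=
  card_lt_card <| filter_ssubset.2 ⟨a, ha, lt_irrefl a⟩

end Finset

open Finset

/-- Indexing: `(S.sort (· ≤ ·)).getD (p - 1) 0` is `s_p`, so `j` is the paper's `j₁ < … < jₙ`. -/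
theorem exists_deltaSet_with_prescribed_gaps_general (n : ℕ) (k : Fin n → ℕ)
    (hkpos : ∀ i, 0 < k i) (d : ℕ) (hd : 0 < d) :
    ∃ S : Finset ℕ, IsDeltaSet S ∧ ∃ hne : S.Nonempty, S.min' hne = d ∧
      ∃ j : Fin n → ℕ, StrictMono j ∧ (∀ i, 1 ≤ j i) ∧ (∀ i, j i < S.card - 1) ∧
        ∀ i, (S.sort (· ≤ ·)).getD (j i) 0
          = (S.sort (· ≤ ·)).getD (j i - 1) 0 + k i := by
  let m := langfordParams (d - 1) fun t => if h : t < n then k ⟨t, h⟩ else 1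
  have hm : ∀ t, 3 * m t < m (t + 1) :=
    three_mul_lt_langfordParams_succ fun t => by split_ifs <;> simp [hkpos]
  have hmono := strictMono_of_three_mul_lt hm
  have hm0 : m 0 + 1 = d := Nat.sub_add_cancel hd
  have hmk (i : Fin n) : m (i + 1) = 3 * m i + k i := by simp [m, langfordParams]
  let S := (langfordChain m n).toFinset
  have hS {a : ℕ} (t : ℕ) (ht : t ≤ n) (h₁ : m t + 1 ≤ a) (h₂ : a ≤ 3 * m t + 1) : a ∈ S :=
    List.mem_toFinset.2 (mem_langfordChain.2 ⟨t, ht, h₁, h₂⟩)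
  have hdS : d ∈ S := hS 0 n.zero_le hm0.le (by omega)
  have hstart (i : Fin n) : m (i + 1) + 1 ∈ S := hS (i + 1) i.2 le_rfl (by omega)
  refine ⟨S, (isSkolemType_langfordChain hm n).isDeltaSet (langfordChain_ne_nil m n), ⟨d, hdS⟩,
    le_antisymm (min'_le _ _ hdS) (le_min' _ _ _ fun y hy =>
      hm0 ▸ le_of_mem_langfordChain hm (List.mem_toFinset.1 hy)),
    fun i => #{y ∈ S | y < m (i + 1) + 1}, fun i i' hii' => ?_, fun i => ?_, fun i => ?_,
    fun i => ?_⟩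
  · have := hmono (show (i : ℕ) + 1 < i' + 1 by omega)
    exact card_filter_lt_lt_card_filter_lt (hstart i) (by omega)
  · have := hmono (show 0 < (i : ℕ) + 1 by omega)
    exact card_pos.2 ⟨d, mem_filter.2 ⟨hdS, by omega⟩⟩
  · have := hm i
    have := card_filter_lt_lt_card_filter_lt (hstart i) (b := m (i + 1) + 2) (by omega)
    have := card_filter_lt_lt_card (hS (a := m (i + 1) + 2) (i + 1) i.2 (by omega) (by omega))
    dsimp only
    omega
  · have := hm i
    rw [getD_sort_card_filter_lt (hstart i), getD_sort_card_filter_lt_sub_one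
      (hS i i.2.le (by omega) le_rfl) (by omega)
      (fun y hy => le_of_mem_langfordChain_of_lt hm (List.mem_toFinset.1 hy)), hmk]
    omega

/-- For any prescribed gaps `k₁ < … < kₙ` and any starting value `d`, there is a δ-set
`S = {s₁ < … < s_l}` with `s₁ = d` and indices `1 ≤ j₁ < … < jₙ < l - 1` such that
`s_{jᵢ+1} - s_{jᵢ} = kᵢ` for each `i`. Here `(S.sort (· ≤ ·)).getD (p - 1) 0` is the `p`-th
smallest element `s_p` of `S` (1-indexed). -/
theorem exists_deltaSet_with_prescribed_gaps (n : ℕ) (hn : 0 < n) (k : Fin n → ℕ)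
    (hkpos : ∀ i, 0 < k i) (hkmono : StrictMono k) (d : ℕ) (hd : 0 < d) :
    ∃ S : Finset ℕ, IsDeltaSet S ∧ ∃ hne : S.Nonempty, S.min' hne = d ∧
      ∃ j : Fin n → ℕ, StrictMono j ∧ (∀ i, 1 ≤ j i) ∧ (∀ i, j i < S.card - 1) ∧
        ∀ i, (S.sort (· ≤ ·)).getD (j i) 0
          = (S.sort (· ≤ ·)).getD (j i - 1) 0 + k i :=
  exists_deltaSet_with_prescribed_gaps_general n k hkpos d hd
end

section
/- The set Σ = {2, 3} is not a δ-set; that is, no finite connected simple graph admits a proper distance {2,3}-labeling. -/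
theorem not_deltaSet_two_three : ¬ IsDeltaSet ({2, 3} : Finset ℕ) := by
  rintro ⟨V, _, G, hconn, f, hmem, -, hdist, hmulti⟩
  obtain ⟨x, y, hxy, hfx, hfy⟩ := hmulti 3 (by decide) (by decide)
  have hdxy : G.dist x y = 3 := by rw [hdist x y hxy (hfx.trans hfy.symm), hfx]
  obtain ⟨p, hp⟩ := SimpleGraph.exists_walk_of_dist_ne_zero (G := G) (u := x) (v := y)
    (by omega)
  set a := p.getVert 1 with ha
  set b := p.getVert 2 with hb
  have hlen : p.length = 3 := by rw [hp, hdxy]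
  have hxa : G.Adj x a := by
    have := p.adj_getVert_succ (i := 0) (by omega)
    simpa using this
  have hab : G.Adj a b := p.adj_getVert_succ (i := 1) (by omega)
  have hby : G.Adj b y := by
    have := p.adj_getVert_succ (i := 2) (by omega)
    rw [show (2 : ℕ) + 1 = p.length by omega, p.getVert_length] at this
    exact this
  have dxa : G.dist x a = 1 := SimpleGraph.dist_eq_one_iff_adj.mpr hxa
  have dab : G.dist a b = 1 := SimpleGraph.dist_eq_one_iff_adj.mpr hab
  have dby : G.dist b y = 1 := SimpleGraph.dist_eq_one_iff_adj.mpr hby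
  have day : G.dist a y = 2 := by
    have h1 : G.dist x y ≤ G.dist x a + G.dist a y := hconn.dist_triangle
    have h2 : G.dist a y ≤ G.dist a b + G.dist b y := hconn.dist_triangle
    omega
  have dxb : G.dist x b = 2 := by
    have h1 : G.dist x y ≤ G.dist x b + G.dist b y := hconn.dist_triangle
    have h2 : G.dist x b ≤ G.dist x a + G.dist a b := hconn.dist_triangle
    omega
  have hax : a ≠ x := fun h => by simp [h] at dxa
  have hby' : b ≠ y := hby.ne
  have hfa : f a = 2 := by
    have := hmem a
    simp only [Finset.mem_insert, Finset.mem_singleton] at this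
    rcases this with h | h
    · exact h
    · exfalso
      have := hdist a x (hax) (by rw [h, hfx])
      rw [SimpleGraph.dist_comm] at this
      omega
  have hfb : f b = 2 := by
    have := hmem b
    simp only [Finset.mem_insert, Finset.mem_singleton] at this
    rcases this with h | h
    · exact h
    · exfalso
      have := hdist b y hby' (by rw [h, hfy])
      omega
  have := hdist a b hab.ne (hfa.trans hfb.symm)
  omega
end

section
/- For every integer n ≥ 3, the set Σ = {2, n} is not a δ-set; that is, no finite connected simple graph admits a proper distance {2,n}-labeling. -/
private lemma length_drop_aux {V : Type*} {G : SimpleGraph V} :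
    ∀ {u v : V} (p : G.Walk u v) (m : ℕ), (p.drop m).length = p.length - m := by
  intro u v p
  induction p with
  | nil => intro m; cases m <;> simp [SimpleGraph.Walk.drop]
  | cons h q ih =>
    intro m
    cases m with
    | zero => simp [SimpleGraph.Walk.drop]
    | succ m => simp [SimpleGraph.Walk.drop, ih m]

theorem not_deltaSet_two_n (n : ℕ) (hn : 3 ≤ n) : ¬ IsDeltaSet ({2, n} : Finset ℕ) := by
  rintro ⟨V, _, G, hconn, f, hmem, -, hdist, hmult⟩
  -- two vertices labeled n
  obtain ⟨b₁, b₂, hb12, hfb1, hfb2⟩ := hmult n (by simp) (by omega)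
  have hdb : G.dist b₁ b₂ = n := by rw [hdist b₁ b₂ hb12 (hfb1.trans hfb2.symm), hfb1]
  obtain ⟨p, hp⟩ := (hconn b₁ b₂).exists_walk_length_eq_dist
  rw [hdb] at hp
  set v₁ := p.getVert 1 with hv1
  set v₂ := p.getVert 2 with hv2
  -- distances from b₁ along the path
  have hd1 : G.dist b₁ v₁ ≤ 1 := by
    have : G.Adj b₁ v₁ := by
      have := p.adj_getVert_succ (i := 0) (by omega)
      simpa using this
    exact le_of_eq (SimpleGraph.dist_eq_one_iff_adj.mpr this)
  have hd2le : G.dist b₁ v₂ ≤ 2 := by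
    calc G.dist b₁ v₂ ≤ G.dist b₁ v₁ + G.dist v₁ v₂ := hconn.dist_triangle
    _ ≤ 1 + 1 := by
        have : G.Adj v₁ v₂ := by
          have := p.adj_getVert_succ (i := 1) (by omega)
          simpa using this
        exact Nat.add_le_add hd1 (le_of_eq (SimpleGraph.dist_eq_one_iff_adj.mpr this))
    _ = 2 := rfl
  -- lower bound via the suffix walk
  have hsuf : G.dist v₂ b₂ ≤ n - 2 := by
    have := G.dist_le (p.drop 2)
    rwa [length_drop_aux, hp] at this
  have hd2ge : 2 ≤ G.dist b₁ v₂ := by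
    have htri : G.dist b₁ b₂ ≤ G.dist b₁ v₂ + G.dist v₂ b₂ := hconn.dist_triangle
    omega
  have hd2 : G.dist b₁ v₂ = 2 := le_antisymm hd2le hd2ge
  -- v₁ and v₂ are labeled 2
  have hlab : ∀ w : V, G.dist b₁ w ≠ 0 → G.dist b₁ w ≠ n → f w = 2 := by
    intro w h0 hn'
    have hwne : w ≠ b₁ := fun h => h0 (by simp [h])
    rcases Finset.mem_insert.mp (hmem w) with h | h
    · exact h
    · exfalso
      apply hn'
      have := hdist w b₁ hwne (by rw [Finset.mem_singleton.mp h, hfb1])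
      rw [G.dist_comm] at this
      rw [this, Finset.mem_singleton.mp h]
  have hadj12 : G.Adj v₁ v₂ := by
    have := p.adj_getVert_succ (i := 1) (by omega)
    simpa using this
  have hd1' : G.dist b₁ v₁ = 1 := by
    have h0 : G.dist b₁ v₁ ≠ 0 := by
      intro h
      have hb : b₁ = v₁ := (hconn b₁ v₁).dist_eq_zero_iff.mp h
      have h1 : G.dist v₁ v₂ = 1 := SimpleGraph.dist_eq_one_iff_adj.mpr hadj12
      rw [hb, h1] at hd2
      omega
    omega
  have hf1 : f v₁ = 2 := hlab v₁ (by omega) (by omega)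
  have hf2 : f v₂ = 2 := hlab v₂ (by omega) (by omega)
  have hne12 : v₁ ≠ v₂ := fun h => by rw [h] at hd1'; omega
  have := hdist v₁ v₂ hne12 (hf1.trans hf2.symm)
  rw [SimpleGraph.dist_eq_one_iff_adj.mpr hadj12] at this
  omega
end

section
/- Let Σ be a δ-set and let s = max Σ. Then |Σ| ≥ ⌈(s+1)/2⌉. -/
lemma walk_dist_add_le {V : Type*} {G : SimpleGraph V} (hconn : G.Connected) {u v : V}
    (p : G.Walk u v) :
    ∀ d i, i + d ≤ p.length → G.dist (p.getVert i) (p.getVert (i + d)) ≤ d := by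
  intro d
  induction d with
  | zero => intro i _; simp
  | succ d ih =>
    intro i hi
    have h1 : G.Adj (p.getVert (i + d)) (p.getVert (i + d + 1)) :=
      p.adj_getVert_succ (by omega)
    have h2 : G.dist (p.getVert (i + d)) (p.getVert (i + d + 1)) ≤ 1 := by
      simpa using SimpleGraph.dist_le h1.toWalk
    have h3 := ih i (by omega)
    have h4 := hconn.dist_triangle (u := p.getVert i) (v := p.getVert (i + d))
      (w := p.getVert (i + d + 1))
    have : i + (d + 1) = i + d + 1 := by omega
    rw [this]
    omega


/-- If `S` is a δ-set with maximum `s`, then `|S| ≥ ⌈(s+1)/2⌉`. -/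
theorem card_deltaSet_ge (S : Finset ℕ) (hne : S.Nonempty) (h : IsDeltaSet S) :
    (S.max' hne + 2) / 2 ≤ S.card := by
  obtain ⟨V, _, G, hconn, f, hf1, hf2, hf3, hf4⟩ := h
  set s := S.max' hne with hs
  rcases Nat.eq_zero_or_pos s with h0 | hspos
  · rw [h0]
    simpa using hne.card_pos
  -- get u v with f u = f v = s, u ≠ v
  obtain ⟨u, v, huv, hfu, hfv⟩ := hf4 s (S.max'_mem hne) (by omega)
  have hdist : G.dist u v = s := by rw [hf3 u v huv (hfu.trans hfv.symm), hfu]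
  obtain ⟨p, hp⟩ := (hconn u v).exists_walk_length_eq_dist
  rw [hdist] at hp
  -- key: for i ≤ j ≤ s, dist (getVert i) (getVert j) = j - i
  have hkey : ∀ i j : ℕ, i ≤ j → j ≤ s → G.dist (p.getVert i) (p.getVert j) = j - i := by
    intro i j hij hjs
    have hle : G.dist (p.getVert i) (p.getVert j) ≤ j - i := by
      have := walk_dist_add_le hconn p (j - i) i (by omega)
      rwa [Nat.add_sub_cancel' hij] at this
    have h1 : G.dist u (p.getVert i) ≤ i := by
      have := walk_dist_add_le hconn p i 0 (by omega)
      simpa using this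
    have h2 : G.dist (p.getVert j) v ≤ s - j := by
      have h2' := walk_dist_add_le hconn p (s - j) j (by omega)
      rw [Nat.add_sub_cancel' hjs] at h2'
      have hv : p.getVert s = v := by rw [← hp]; exact p.getVert_length
      rwa [hv] at h2'
    have ht1 := hconn.dist_triangle (u := u) (v := p.getVert i) (w := p.getVert j)
    have ht2 := hconn.dist_triangle (u := u) (v := p.getVert j) (w := v)
    omega
  -- labels along path
  set g : Fin (s + 1) → ℕ := fun i => f (p.getVert i) with hg
  have hdiff : ∀ i j : Fin (s + 1), (i : ℕ) < j → g i = g j → (j : ℕ) - i = g i := by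
    intro i j hij hgij
    have hd : G.dist (p.getVert i) (p.getVert j) = (j : ℕ) - i :=
      hkey i j (le_of_lt hij) (by omega)
    have hne' : p.getVert (i : ℕ) ≠ p.getVert (j : ℕ) := by
      intro he
      rw [he, SimpleGraph.dist_self] at hd
      omega
    rw [← hd, hf3 _ _ hne' hgij]
  -- each fiber of g has at most 2 elements
  have hfib : ∀ a ∈ Finset.univ.image g,
      (Finset.univ.filter fun i => g i = a).card ≤ 2 := by
    intro a _
    by_contra hc
    push_neg at hc
    obtain ⟨x, hx, y, hy, z, hz, hxy, hxz, hyz⟩ := Finset.two_lt_card.mp hc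
    simp only [Finset.mem_filter] at hx hy hz
    -- order them
    have key : ∀ i j : Fin (s + 1), (i : ℕ) < j → g i = a → g j = a → (j : ℕ) - i = a := by
      intro i j hij hi hj
      have := hdiff i j hij (hi.trans hj.symm)
      rwa [hi] at this
    have : False := by
      rcases lt_trichotomy (x : ℕ) (y : ℕ) with h1 | h1 | h1
      · rcases lt_trichotomy (y : ℕ) (z : ℕ) with h2 | h2 | h2
        · have e1 := key x y h1 hx.2 hy.2
          have e2 := key y z h2 hy.2 hz.2
          have e3 := key x z (by omega) hx.2 hz.2
          omega
        · exact hyz (Fin.ext h2)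
        · rcases lt_trichotomy (x : ℕ) (z : ℕ) with h3 | h3 | h3
          · have e1 := key x z h3 hx.2 hz.2
            have e2 := key z y h2 hz.2 hy.2
            have e3 := key x y h1 hx.2 hy.2
            omega
          · exact hxz (Fin.ext h3)
          · have e1 := key z x h3 hz.2 hx.2
            have e2 := key x y h1 hx.2 hy.2
            have e3 := key z y h2 hz.2 hy.2
            omega
      · exact hxy (Fin.ext h1)
      · rcases lt_trichotomy (x : ℕ) (z : ℕ) with h2 | h2 | h2
        · have e1 := key y x h1 hy.2 hx.2
          have e2 := key x z h2 hx.2 hz.2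
          have e3 := key y z (by omega) hy.2 hz.2
          omega
        · exact hxz (Fin.ext h2)
        · rcases lt_trichotomy (y : ℕ) (z : ℕ) with h3 | h3 | h3
          · have e1 := key y z h3 hy.2 hz.2
            have e2 := key z x h2 hz.2 hx.2
            have e3 := key y x h1 hy.2 hx.2
            omega
          · exact hyz (Fin.ext h3)
          · have e1 := key z y h3 hz.2 hy.2
            have e2 := key y x h1 hy.2 hx.2
            have e3 := key z x h2 hz.2 hx.2
            omega
    exact this
  have hcount : (Finset.univ : Finset (Fin (s + 1))).card ≤
      2 * (Finset.univ.image g).card :=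
    Finset.card_le_mul_card_image _ 2 hfib
  have himg : (Finset.univ.image g).card ≤ S.card := by
    apply Finset.card_le_card
    intro a ha
    obtain ⟨i, _, rfl⟩ := Finset.mem_image.mp ha
    exact hf1 _
  simp only [Finset.card_univ, Fintype.card_fin] at hcount
  omega
end

section
/- For every positive integer m, there exists an extended Skolem sequence of order m: a sequence (s_1, s_2, …, s_{2m+1}) of integers in {0,1,…,m} such that 0 appears in exactly one position, and for every k ∈ {1,…,m} there are exactly two indices i < j in {1,…,2m+1} with s_i = s_j = k and j − i = k. -/
/-- For every positive integer `m` there exists an extended Skolem sequence of order `m`: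
a sequence of `2m+1` integers in `{0,…,m}` in which `0` occurs exactly once and, for each
`k ∈ {1,…,m}`, the value `k` occurs exactly twice, at two positions differing by exactly
`k`. -/
theorem exists_extended_skolem_sequence (m : ℕ) (hm : 0 < m) :
    ∃ s : Fin (2 * m + 1) → ℕ, (∀ i, s i ≤ m) ∧ (∃! i, s i = 0) ∧
      ∀ k : ℕ, 1 ≤ k → k ≤ m →
        (Finset.univ.filter (fun i : Fin (2 * m + 1) => s i = k)).card = 2 ∧
        ∃ i j : Fin (2 * m + 1), i < j ∧ s i = k ∧ s j = k ∧ (j : ℕ) = (i : ℕ) + k := by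
  classical
  refine ⟨fun i =>
      if (i : ℕ) + 1 ≤ (m+1)/2 then 2*((m+1)/2) + 1 - 2*((i : ℕ)+1)
      else if (i : ℕ) + 1 ≤ 2*((m+1)/2) then 2*((i : ℕ)+1) - (2*((m+1)/2) + 1)
      else if (i : ℕ) + 1 ≤ 2*((m+1)/2) + m/2 + 1 then
        2*((2*((m+1)/2) + m/2 + 1) - ((i : ℕ)+1))
      else 2*(((i : ℕ)+1) - (2*((m+1)/2) + m/2 + 1)), ?_, ?_, ?_⟩
  · intro i
    have hi := i.isLt
    dsimp only
    split_ifs <;> omega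
  · refine ⟨⟨2*((m+1)/2) + m/2, by omega⟩, ?_, ?_⟩
    · dsimp only
      split_ifs <;> omega
    · intro j hj
      have hj' := j.isLt
      apply Fin.ext
      dsimp only at hj ⊢
      split_ifs at hj <;> omega
  · intro k hk1 hkm
    obtain ⟨x1, x2, hx1, hx2, hsum, key⟩ :
        ∃ x1 x2 : ℕ, x1 < 2*m+1 ∧ x2 < 2*m+1 ∧ x2 = x1 + k ∧
          ∀ i : Fin (2*m+1),
            (if (i : ℕ) + 1 ≤ (m+1)/2 then 2*((m+1)/2) + 1 - 2*((i : ℕ)+1)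
             else if (i : ℕ) + 1 ≤ 2*((m+1)/2) then 2*((i : ℕ)+1) - (2*((m+1)/2) + 1)
             else if (i : ℕ) + 1 ≤ 2*((m+1)/2) + m/2 + 1 then
               2*((2*((m+1)/2) + m/2 + 1) - ((i : ℕ)+1))
             else 2*(((i : ℕ)+1) - (2*((m+1)/2) + m/2 + 1))) = k ↔
            (i : ℕ) = x1 ∨ (i : ℕ) = x2 := by
      rcases Nat.even_or_odd k with ⟨t, ht⟩ | ⟨t, ht⟩
      · -- k even, pair around the center M = 2*((m+1)/2) + m/2 + 1
        refine ⟨2*((m+1)/2) + m/2 - t, 2*((m+1)/2) + m/2 + t, by omega, by omega,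
          by omega, fun i => ?_⟩
        have hi := i.isLt
        split_ifs <;> omega
      · -- k odd, pair symmetric in the left block
        refine ⟨(m+1)/2 - t - 1, (m+1)/2 + t, by omega, by omega, by omega, fun i => ?_⟩
        have hi := i.isLt
        split_ifs <;> omega
    have hne : (⟨x1, hx1⟩ : Fin (2*m+1)) ≠ ⟨x2, hx2⟩ := by
      simp only [ne_eq, Fin.mk.injEq]
      omega
    constructor
    · have hset : (Finset.univ.filter (fun i : Fin (2 * m + 1) =>
          (if (i : ℕ) + 1 ≤ (m+1)/2 then 2*((m+1)/2) + 1 - 2*((i : ℕ)+1)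
           else if (i : ℕ) + 1 ≤ 2*((m+1)/2) then 2*((i : ℕ)+1) - (2*((m+1)/2) + 1)
           else if (i : ℕ) + 1 ≤ 2*((m+1)/2) + m/2 + 1 then
             2*((2*((m+1)/2) + m/2 + 1) - ((i : ℕ)+1))
           else 2*(((i : ℕ)+1) - (2*((m+1)/2) + m/2 + 1))) = k))
          = {⟨x1, hx1⟩, ⟨x2, hx2⟩} := by
        ext i
        simp only [Finset.mem_filter, Finset.mem_univ, true_and, Finset.mem_insert,
          Finset.mem_singleton, key i, Fin.ext_iff]
      rw [hset, Finset.card_pair hne]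
    · refine ⟨⟨x1, hx1⟩, ⟨x2, hx2⟩, ?_, ?_, ?_, ?_⟩
      · simp only [Fin.mk_lt_mk]
        omega
      · exact (key _).2 (Or.inl rfl)
      · exact (key _).2 (Or.inr rfl)
      · simpa using hsum
end
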